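/- arXiv:2205.10241 — 9 statements merged into one kernel-verified Lean document; each statement's English description precedes it below -/
import Mathlib

section
/- Let U : ℝ → ℝ^N be differentiable with A_h (dU/dt)(t) = F_h(U(t))U(t) for all t. Then the semi-discrete momentum I_h(t) = (1/2)⟨A_h U(t), U(t)⟩_h is constant in t; equivalently, its derivative vanishes: d/dt [(1/2)⟨A_h U(t), U(t)⟩_h] = 0 for all t. -/
open Matrix BigOperators

private lemma skew_pair {N : ℕ} (D : Matrix (Fin N) (Fin N) ℝ) (hD : Dᵀ = -D)
    (V W : Fin N → ℝ) : D.mulVec V ⬝ᵥ W = -(D.mulVec W ⬝ᵥ V) := by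
  rw [dotProduct_comm, dotProduct_mulVec, ← mulVec_transpose, hD, neg_mulVec, neg_dotProduct]

private lemma symm_pair {N : ℕ} (A : Matrix (Fin N) (Fin N) ℝ) (hA : Aᵀ = A)
    (V W : Fin N → ℝ) : A.mulVec V ⬝ᵥ W = A.mulVec W ⬝ᵥ V := by
  rw [dotProduct_comm, dotProduct_mulVec, ← mulVec_transpose, hA]

/-- For the semi-discrete system `A_h (dU/dt) = F_h(U)U`, the
semi-discrete momentum `I_h(t) = (1/2)⟨A_h U(t), U(t)⟩_h` is constant in `t`;
equivalently its derivative vanishes. -/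
theorem semidiscrete_momentum_conservation
    (N : ℕ) (hN : 1 ≤ N) (h : ℝ) (hh : 0 < h)
    (κ δ b α β : ℝ) (p : ℕ) (hp : 2 ≤ p)
    (D1 D2 D3 D4 : Matrix (Fin N) (Fin N) ℝ)
    (hD1 : D1ᵀ = -D1) (hD3 : D3ᵀ = -D3)
    (hD2 : D2ᵀ = D2) (hD4 : D4ᵀ = D4)
    (Ah : Matrix (Fin N) (Fin N) ℝ) (hAh : Ah = 1 - δ • D2 + α • D4)
    (U U' : ℝ → Fin N → ℝ)
    (hU : ∀ t, HasDerivAt U (U' t) t)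
    (hODE : ∀ t, Ah.mulVec (U' t) =
      -(κ • D1.mulVec (U t) + b • D3.mulVec (U t)
        + (((p : ℝ) * β) / ((p : ℝ) + 1)) •
          ((fun j => (U t j) ^ (p - 1) * D1.mulVec (U t) j)
            + D1.mulVec (fun j => (U t j) ^ p)))) :
    (∀ t, HasDerivAt
        (fun t => (1 / 2) * (h * ∑ j, Ah.mulVec (U t) j * U t j)) (0 : ℝ) t)
      ∧ ∀ t₁ t₂,
        (1 / 2) * (h * ∑ j, Ah.mulVec (U t₁) j * U t₁ j)
          = (1 / 2) * (h * ∑ j, Ah.mulVec (U t₂) j * U t₂ j) := by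
  have hAhT : Ahᵀ = Ah := by
    subst hAh
    simp [Matrix.transpose_add, Matrix.transpose_sub, Matrix.transpose_smul, hD2, hD4]
  have hUj : ∀ t j, HasDerivAt (fun s => U s j) (U' t j) t := by
    intro t j
    exact (hasDerivAt_pi.mp (hU t)) j
  have skew0 : ∀ (D : Matrix (Fin N) (Fin N) ℝ), Dᵀ = -D →
      ∀ V : Fin N → ℝ, D.mulVec V ⬝ᵥ V = 0 := by
    intro D hD V
    have := skew_pair D hD V V
    linarith
  have hder : ∀ t, HasDerivAt (fun t => ∑ j, Ah.mulVec (U t) j * U t j) 0 t := by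
    intro t
    have h1 : ∀ j : Fin N, HasDerivAt (fun s => Ah.mulVec (U s) j)
        (Ah.mulVec (U' t) j) t := by
      intro j
      simpa [Matrix.mulVec, dotProduct] using
        (HasDerivAt.fun_sum (fun k _ => (hUj t k).const_mul (Ah j k)))
    have h2 : HasDerivAt (fun t => ∑ j, Ah.mulVec (U t) j * U t j)
        (∑ j, (Ah.mulVec (U' t) j * U t j + Ah.mulVec (U t) j * U' t j)) t :=
      HasDerivAt.fun_sum (fun j _ => (h1 j).mul (hUj t j))
    have hFU : Ah.mulVec (U' t) ⬝ᵥ U t = 0 := by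
      rw [hODE t]
      set V := U t with hV
      have h1' : D1.mulVec V ⬝ᵥ V = 0 := skew0 D1 hD1 V
      have h3' : D3.mulVec V ⬝ᵥ V = 0 := skew0 D3 hD3 V
      have hG : (fun j => V j ^ (p - 1) * D1.mulVec V j) ⬝ᵥ V
          = D1.mulVec V ⬝ᵥ (fun j => V j ^ p) := by
        simp only [dotProduct]
        refine Finset.sum_congr rfl (fun j _ => ?_)
        have hpow : V j ^ (p - 1) * V j = V j ^ p := by
          rw [← pow_succ]; congr 1; omega
        calc V j ^ (p - 1) * D1.mulVec V j * V j
            = D1.mulVec V j * (V j ^ (p - 1) * V j) := by ring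
          _ = D1.mulVec V j * V j ^ p := by rw [hpow]
      have hW : D1.mulVec (fun j => V j ^ p) ⬝ᵥ V
          = -(D1.mulVec V ⬝ᵥ (fun j => V j ^ p)) := skew_pair D1 hD1 _ V
      simp [neg_dotProduct, add_dotProduct, smul_dotProduct, h1', h3', hG, hW]
    have split : (∑ j, (Ah.mulVec (U' t) j * U t j + Ah.mulVec (U t) j * U' t j))
        = Ah.mulVec (U' t) ⬝ᵥ U t + Ah.mulVec (U t) ⬝ᵥ U' t := by
      simp [dotProduct, Finset.sum_add_distrib]
    have key : (∑ j, (Ah.mulVec (U' t) j * U t j + Ah.mulVec (U t) j * U' t j)) = 0 := by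
      rw [split, symm_pair Ah hAhT (U t) (U' t), hFU]
      ring
    exact key ▸ h2
  have hder2 : ∀ t, HasDerivAt
      (fun t => (1 / 2) * (h * ∑ j, Ah.mulVec (U t) j * U t j)) (0 : ℝ) t := by
    intro t
    simpa using (((hder t).const_mul h).const_mul (1 / 2 : ℝ))
  refine ⟨hder2, ?_⟩
  intro t₁ t₂
  exact is_const_of_deriv_eq_zero (fun x => (hder2 x).differentiableAt)
    (fun x => (hder2 x).deriv) t₁ t₂
end

section
/- Assume p = 2, A_h is invertible, and D₁𝟙 = D₂𝟙 = D₃𝟙 = D₄𝟙 = 0. Let U : ℝ → ℝ^N be differentiable with A_h (dU/dt)(t) = F_h(U(t))U(t) for all t. Then the semi-discrete mass M_h(t) = ⟨U(t), 𝟙⟩_h is constant in t. -/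
open Matrix BigOperators

/-- For `p = 2`, with `A_h` invertible and all differentiation
matrices annihilating the all-ones vector, the semi-discrete system
`A_h (dU/dt) = F_h(U)U` conserves the semi-discrete mass `M_h(t) = ⟨U(t), 𝟙⟩_h`. -/
theorem semidiscrete_mass_conservation
    (N : ℕ) (hN : 1 ≤ N) (h : ℝ) (hh : 0 < h)
    (κ δ b α β : ℝ) (p : ℕ) (hp : 2 ≤ p) (hp2 : p = 2)
    (D1 D2 D3 D4 : Matrix (Fin N) (Fin N) ℝ)
    (hD1 : D1ᵀ = -D1) (hD3 : D3ᵀ = -D3)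
    (hD2 : D2ᵀ = D2) (hD4 : D4ᵀ = D4)
    (hD1one : D1.mulVec (fun _ => (1 : ℝ)) = 0)
    (hD2one : D2.mulVec (fun _ => (1 : ℝ)) = 0)
    (hD3one : D3.mulVec (fun _ => (1 : ℝ)) = 0)
    (hD4one : D4.mulVec (fun _ => (1 : ℝ)) = 0)
    (Ah : Matrix (Fin N) (Fin N) ℝ) (hAh : Ah = 1 - δ • D2 + α • D4)
    (hAhinv : IsUnit Ah)
    (U U' : ℝ → Fin N → ℝ)
    (hU : ∀ t, HasDerivAt U (U' t) t)
    (hODE : ∀ t, Ah.mulVec (U' t) =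
      -(κ • D1.mulVec (U t) + b • D3.mulVec (U t)
        + (((p : ℝ) * β) / ((p : ℝ) + 1)) •
          ((fun j => (U t j) ^ (p - 1) * D1.mulVec (U t) j)
            + D1.mulVec (fun j => (U t j) ^ p)))) :
    ∀ t₁ t₂, h * ∑ j, U t₁ j * 1 = h * ∑ j, U t₂ j * 1 := by
  subst hp2
  -- skew lemma
  have skew0 : ∀ (A : Matrix (Fin N) (Fin N) ℝ), Aᵀ = -A →
      ∀ v : Fin N → ℝ, v ⬝ᵥ A.mulVec v = 0 := by
    intro A hA v
    have h1 : v ⬝ᵥ A.mulVec v = (Aᵀ.mulVec v) ⬝ᵥ v := by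
      rw [dotProduct_mulVec, ← mulVec_transpose]
    rw [hA, neg_mulVec, neg_dotProduct, dotProduct_comm] at h1
    rw [dotProduct_comm]
    linarith
  have dot1 : ∀ (A : Matrix (Fin N) (Fin N) ℝ),
      A.mulVec (fun _ => (1:ℝ)) = 0 → Aᵀ = -A →
      ∀ v : Fin N → ℝ, (fun _ => (1:ℝ)) ⬝ᵥ A.mulVec v = 0 := by
    intro A hA0 hAt v
    rw [dotProduct_mulVec, ← mulVec_transpose, hAt, neg_mulVec, hA0]
    simp
  have key : ∀ t, ∑ j, U' t j = 0 := by
    intro t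
    have hAhT : Ah.mulVec (U' t) ⬝ᵥ (fun _ => (1:ℝ)) = ∑ j, U' t j := by
      rw [dotProduct_comm, dotProduct_mulVec, ← mulVec_transpose, hAh]
      have : (1 - δ • D2 + α • D4)ᵀ.mulVec (fun _ => (1:ℝ)) = (fun _ => (1:ℝ)) := by
        rw [transpose_add, transpose_sub, transpose_smul, transpose_smul, transpose_one,
          hD2, hD4, add_mulVec, sub_mulVec, smul_mulVec, smul_mulVec,
          hD2one, hD4one, one_mulVec]
        simp
      rw [this]
      simp [dotProduct]
    have hRHS : Ah.mulVec (U' t) ⬝ᵥ (fun _ => (1:ℝ)) = 0 := by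
      rw [hODE t, dotProduct_comm]
      rw [dotProduct_neg, dotProduct_add, dotProduct_add, dotProduct_smul,
        dotProduct_smul, dotProduct_smul, dotProduct_add]
      rw [dot1 D1 hD1one hD1, dot1 D3 hD3one hD3, dot1 D1 hD1one hD1]
      have hw : (fun _ => (1:ℝ)) ⬝ᵥ (fun j => (U t j) ^ (2-1) * D1.mulVec (U t) j) = 0 := by
        have : (fun _ => (1:ℝ)) ⬝ᵥ (fun j => (U t j) ^ (2-1) * D1.mulVec (U t) j)
            = U t ⬝ᵥ D1.mulVec (U t) := by
          simp [dotProduct]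
        rw [this, skew0 D1 hD1]
      rw [hw]
      simp
    rw [← hAhT, hRHS]
  have hf : ∀ t, HasDerivAt (fun s => ∑ j, U s j) 0 t := by
    intro t
    have := (hasDerivAt_pi.mp (hU t))
    have hsum : HasDerivAt (fun s => ∑ j, U s j) (∑ j, U' t j) t :=
      HasDerivAt.fun_sum (fun j _ => this j)
    rwa [key t] at hsum
  intro t₁ t₂
  have hconst : (∑ j, U t₁ j) = ∑ j, U t₂ j := by
    have := is_const_of_deriv_eq_zero (f := fun s => ∑ j, U s j)
      (fun t => (hf t).differentiableAt) (fun t => (hf t).deriv) t₁ t₂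
    simpa using this
  simp only [mul_one]
  rw [hconst]
end

section
/- Suppose the Runge–Kutta coefficients satisfy the symplectic condition b_i a_{ij} + b_j a_{ji} = b_i b_j for all i, j ∈ {1,…,s}. Then one step of Scheme 2.1 conserves the discrete momentum: (1/2)⟨A_h U⁺, U⁺⟩_h = (1/2)⟨A_h U, U⟩_h. -/
open Matrix BigOperators

/-- Under the symplectic condition `bᵢaᵢⱼ + bⱼaⱼᵢ = bᵢbⱼ`, one step of
Scheme 2.1 conserves the discrete momentum `(1/2)⟨A_h U, U⟩_h`. -/
theorem scheme21_momentum_conservation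
    (N : ℕ) (hN : 1 ≤ N) (h τ : ℝ) (hh : 0 < h)
    (κ δ b α β : ℝ) (p : ℕ) (hp : 2 ≤ p)
    (D1 D2 D3 D4 : Matrix (Fin N) (Fin N) ℝ)
    (hD1 : D1ᵀ = -D1) (hD3 : D3ᵀ = -D3)
    (hD2 : D2ᵀ = D2) (hD4 : D4ᵀ = D4)
    (Ah : Matrix (Fin N) (Fin N) ℝ) (hAh : Ah = 1 - δ • D2 + α • D4)
    (s : ℕ) (hs : 1 ≤ s) (a : Fin s → Fin s → ℝ) (bw : Fin s → ℝ)
    (hsymp : ∀ i j, bw i * a i j + bw j * a j i = bw i * bw j)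
    (U Uplus : Fin N → ℝ) (K Ust : Fin s → Fin N → ℝ)
    (hK : ∀ i, Ah.mulVec (K i) =
      -(κ • D1.mulVec (Ust i) + b • D3.mulVec (Ust i)
        + (((p : ℝ) * β) / ((p : ℝ) + 1)) •
          ((fun j => (Ust i j) ^ (p - 1) * D1.mulVec (Ust i) j)
            + D1.mulVec (fun j => (Ust i j) ^ p))))
    (hUst : ∀ i, Ust i = U + τ • ∑ j, a i j • K j)
    (hUplus : Uplus = U + τ • ∑ i, bw i • K i) :
    (1 / 2) * (h * ∑ j, Ah.mulVec Uplus j * Uplus j)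
      = (1 / 2) * (h * ∑ j, Ah.mulVec U j * U j) := by
  suffices hmain : Ah.mulVec Uplus ⬝ᵥ Uplus = Ah.mulVec U ⬝ᵥ U by
    have e1 : (∑ j, Ah.mulVec Uplus j * Uplus j) = Ah.mulVec Uplus ⬝ᵥ Uplus := rfl
    have e2 : (∑ j, Ah.mulVec U j * U j) = Ah.mulVec U ⬝ᵥ U := rfl
    rw [e1, e2, hmain]
  -- symmetry of Ah
  have hAsym : Ahᵀ = Ah := by
    rw [hAh]; simp [Matrix.transpose_sub, Matrix.transpose_smul, hD2, hD4]
  have hBsym : ∀ x y : Fin N → ℝ, Ah.mulVec x ⬝ᵥ y = Ah.mulVec y ⬝ᵥ x := by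
    intro x y
    rw [dotProduct_comm, dotProduct_mulVec, ← Matrix.mulVec_transpose, hAsym]
  have hskew : ∀ (D : Matrix (Fin N) (Fin N) ℝ), Dᵀ = -D →
      ∀ x y : Fin N → ℝ, D.mulVec x ⬝ᵥ y = -(D.mulVec y ⬝ᵥ x) := by
    intro D hD x y
    rw [dotProduct_comm, dotProduct_mulVec, ← Matrix.mulVec_transpose, hD,
      Matrix.neg_mulVec, neg_dotProduct]
  have hdotsum : ∀ (v : Fin N → ℝ) (f : Fin s → Fin N → ℝ),
      v ⬝ᵥ (∑ i, f i) = ∑ i, v ⬝ᵥ f i := by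
    intro v f
    simp [dotProduct, Finset.sum_apply, Finset.mul_sum]
    exact Finset.sum_comm
  -- the key orthogonality : ⟨A K_i, U^(i)⟩ = 0
  have key : ∀ i, Ah.mulVec (K i) ⬝ᵥ Ust i = 0 := by
    intro i
    rw [hK i]
    set V := Ust i with hV
    have h1 : D1.mulVec V ⬝ᵥ V = 0 := by
      have := hskew D1 hD1 V V; linarith
    have h3 : D3.mulVec V ⬝ᵥ V = 0 := by
      have := hskew D3 hD3 V V; linarith
    have hg : (fun j => V j ^ (p - 1) * D1.mulVec V j) ⬝ᵥ V
        = D1.mulVec V ⬝ᵥ (fun j => V j ^ p) := by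
      simp only [dotProduct]
      refine Finset.sum_congr rfl fun j _ => ?_
      have hpow : V j ^ (p - 1) * V j = V j ^ p := by
        rw [← pow_succ]; congr 1; omega
      calc V j ^ (p - 1) * D1.mulVec V j * V j
          = D1.mulVec V j * (V j ^ (p - 1) * V j) := by ring
        _ = D1.mulVec V j * V j ^ p := by rw [hpow]
    have h4 : D1.mulVec (fun j => V j ^ p) ⬝ᵥ V
        = -(D1.mulVec V ⬝ᵥ (fun j => V j ^ p)) := hskew D1 hD1 _ _
    simp only [neg_dotProduct, add_dotProduct, smul_dotProduct, smul_eq_mul]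
    rw [h1, h3, hg, h4]
    ring
  set Bij : Fin s → Fin s → ℝ := fun i j => Ah.mulVec (K i) ⬝ᵥ K j with hBij
  have hBijsym : ∀ i j, Bij i j = Bij j i := fun i j => hBsym _ _
  set t1 : Fin s → ℝ := fun i => ∑ j, a i j * Bij i j with ht1
  -- ⟨A K_i, U⟩ in terms of Bij
  have hKU : ∀ i, Ah.mulVec (K i) ⬝ᵥ U = -(τ * t1 i) := by
    intro i
    have h0 := key i
    rw [hUst i, dotProduct_add, dotProduct_smul, hdotsum] at h0
    have hterm : ∀ j, Ah.mulVec (K i) ⬝ᵥ (a i j • K j) = a i j * Bij i j := by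
      intro j; rw [dotProduct_smul]; rfl
    simp only [hterm, smul_eq_mul] at h0
    simp only [ht1]
    linarith
  set S : Fin N → ℝ := ∑ i, bw i • K i with hS
  have hSU : Ah.mulVec S ⬝ᵥ U = ∑ i, bw i * (Ah.mulVec (K i) ⬝ᵥ U) := by
    rw [← hBsym U S, hS, hdotsum]
    refine Finset.sum_congr rfl fun i _ => ?_
    rw [dotProduct_smul, smul_eq_mul, hBsym U (K i)]
  set T1 : ℝ := ∑ i, bw i * t1 i with hT1
  have hSU' : Ah.mulVec S ⬝ᵥ U = -(τ * T1) := by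
    rw [hSU]
    calc ∑ i, bw i * (Ah.mulVec (K i) ⬝ᵥ U)
        = ∑ i, -(τ * (bw i * t1 i)) := by
          refine Finset.sum_congr rfl fun i _ => ?_
          rw [hKU i]; ring
      _ = -(∑ i, τ * (bw i * t1 i)) := by rw [← Finset.sum_neg_distrib]
      _ = -(τ * T1) := by rw [hT1, Finset.mul_sum]
  set T2 : ℝ := ∑ i, ∑ j, bw i * (bw j * Bij i j) with hT2def
  have hSS : Ah.mulVec S ⬝ᵥ S = T2 := by
    rw [hT2def, hS, hdotsum]
    refine Finset.sum_congr rfl fun i _ => ?_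
    rw [dotProduct_smul, smul_eq_mul, ← hS, hBsym S (K i), hS, hdotsum, Finset.mul_sum]
    refine Finset.sum_congr rfl fun j _ => ?_
    rw [dotProduct_smul, smul_eq_mul]
  have hT1' : T1 = ∑ i, ∑ j, bw i * (a i j * Bij i j) := by
    rw [hT1]
    exact Finset.sum_congr rfl fun i _ => by rw [ht1, Finset.mul_sum]
  have hT2 : T2 = 2 * T1 := by
    rw [hT1', hT2def]
    calc ∑ i, ∑ j, bw i * (bw j * Bij i j)
        = ∑ i, ∑ j, (bw i * (a i j * Bij i j) + bw j * (a j i * Bij i j)) := by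
          refine Finset.sum_congr rfl fun i _ => Finset.sum_congr rfl fun j _ => ?_
          linear_combination (-(Bij i j)) * hsymp i j
      _ = (∑ i, ∑ j, bw i * (a i j * Bij i j))
            + ∑ i, ∑ j, bw j * (a j i * Bij i j) := by
          simp only [Finset.sum_add_distrib]
      _ = (∑ i, ∑ j, bw i * (a i j * Bij i j))
            + ∑ i, ∑ j, bw i * (a i j * Bij i j) := by
          congr 1
          rw [Finset.sum_comm]
          refine Finset.sum_congr rfl fun i _ => Finset.sum_congr rfl fun j _ => ?_
          rw [hBijsym j i]
      _ = 2 * ∑ i, ∑ j, bw i * (a i j * Bij i j) := by ring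
  have expand : Ah.mulVec (U + τ • S) ⬝ᵥ (U + τ • S)
      = Ah.mulVec U ⬝ᵥ U + τ * (Ah.mulVec U ⬝ᵥ S) + τ * (Ah.mulVec S ⬝ᵥ U)
        + τ * (τ * (Ah.mulVec S ⬝ᵥ S)) := by
    rw [Matrix.mulVec_add, Matrix.mulVec_smul, add_dotProduct, smul_dotProduct,
      dotProduct_add, dotProduct_add, dotProduct_smul, dotProduct_smul]
    simp only [smul_eq_mul]
    ring
  rw [hUplus, expand, hBsym U S, hSU', hSS, hT2]
  ring
end

section
/- Assume p = 2, A_h is invertible, and D₁𝟙 = D₂𝟙 = D₃𝟙 = D₄𝟙 = 0. Then for any Runge–Kutta coefficients, one step of Scheme 2.1 conserves the discrete mass: ⟨U⁺, 𝟙⟩_h = ⟨U, 𝟙⟩_h. -/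
open Matrix BigOperators

lemma dot_one_mulVec_zero {N : ℕ} (M : Matrix (Fin N) (Fin N) ℝ)
    (hM : Mᵀ.mulVec (fun _ => (1 : ℝ)) = 0) (v : Fin N → ℝ) :
    (fun _ => (1 : ℝ)) ⬝ᵥ M.mulVec v = 0 := by
  rw [dotProduct_mulVec, ← Matrix.mulVec_transpose, hM, zero_dotProduct]

lemma skew_dot {N : ℕ} (M : Matrix (Fin N) (Fin N) ℝ) (hM : Mᵀ = -M) (v : Fin N → ℝ) :
    v ⬝ᵥ M.mulVec v = 0 := by
  have h1 : v ⬝ᵥ M.mulVec v = -(v ⬝ᵥ M.mulVec v) := by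
    conv_lhs => rw [dotProduct_mulVec, ← Matrix.mulVec_transpose, hM,
      Matrix.neg_mulVec, neg_dotProduct, dotProduct_comm]
  linarith

/-- For `p = 2`, with `A_h` invertible and all differentiation
matrices annihilating the all-ones vector, one step of Scheme 2.1 (for ANY
Runge–Kutta coefficients) conserves the discrete mass `⟨U, 𝟙⟩_h`. -/
theorem scheme21_mass_conservation
    (N : ℕ) (hN : 1 ≤ N) (h τ : ℝ) (hh : 0 < h)
    (κ δ b α β : ℝ) (p : ℕ) (hp : 2 ≤ p) (hp2 : p = 2)
    (D1 D2 D3 D4 : Matrix (Fin N) (Fin N) ℝ)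
    (hD1 : D1ᵀ = -D1) (hD3 : D3ᵀ = -D3)
    (hD2 : D2ᵀ = D2) (hD4 : D4ᵀ = D4)
    (hD1one : D1.mulVec (fun _ => (1 : ℝ)) = 0)
    (hD2one : D2.mulVec (fun _ => (1 : ℝ)) = 0)
    (hD3one : D3.mulVec (fun _ => (1 : ℝ)) = 0)
    (hD4one : D4.mulVec (fun _ => (1 : ℝ)) = 0)
    (Ah : Matrix (Fin N) (Fin N) ℝ) (hAh : Ah = 1 - δ • D2 + α • D4)
    (hAhinv : IsUnit Ah)
    (s : ℕ) (hs : 1 ≤ s) (a : Fin s → Fin s → ℝ) (bw : Fin s → ℝ)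
    (U Uplus : Fin N → ℝ) (K Ust : Fin s → Fin N → ℝ)
    (hK : ∀ i, Ah.mulVec (K i) =
      -(κ • D1.mulVec (Ust i) + b • D3.mulVec (Ust i)
        + (((p : ℝ) * β) / ((p : ℝ) + 1)) •
          ((fun j => (Ust i j) ^ (p - 1) * D1.mulVec (Ust i) j)
            + D1.mulVec (fun j => (Ust i j) ^ p))))
    (hUst : ∀ i, Ust i = U + τ • ∑ j, a i j • K j)
    (hUplus : Uplus = U + τ • ∑ i, bw i • K i) :
    h * ∑ j, Uplus j * 1 = h * ∑ j, U j * 1 := by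
  subst hp2
  have hD1T : D1ᵀ.mulVec (fun _ => (1 : ℝ)) = 0 := by
    rw [hD1, Matrix.neg_mulVec, hD1one, neg_zero]
  have hD3T : D3ᵀ.mulVec (fun _ => (1 : ℝ)) = 0 := by
    rw [hD3, Matrix.neg_mulVec, hD3one, neg_zero]
  -- key: ∑ j, K i j = 0
  have hKsum : ∀ i, ∑ j, K i j = 0 := by
    intro i
    have h1 : (fun _ => (1 : ℝ)) ⬝ᵥ Ah.mulVec (K i) = ∑ j, K i j := by
      rw [dotProduct_mulVec, ← Matrix.mulVec_transpose]
      have hAhT : Ahᵀ.mulVec (fun _ => (1 : ℝ)) = fun _ => (1 : ℝ) := by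
        rw [hAh]
        simp [Matrix.transpose_add, Matrix.transpose_sub, Matrix.transpose_smul, hD2, hD4,
          Matrix.add_mulVec, Matrix.sub_mulVec, Matrix.smul_mulVec, hD2one, hD4one,
          Matrix.one_mulVec]
      rw [hAhT]
      simp [dotProduct]
    have h2 : (fun _ => (1 : ℝ)) ⬝ᵥ Ah.mulVec (K i) = 0 := by
      rw [hK i]
      have e1 : (fun _ => (1 : ℝ)) ⬝ᵥ D1.mulVec (Ust i) = 0 :=
        dot_one_mulVec_zero D1 hD1T _
      have e2 : (fun _ => (1 : ℝ)) ⬝ᵥ D3.mulVec (Ust i) = 0 :=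
        dot_one_mulVec_zero D3 hD3T _
      have e3 : (fun _ => (1 : ℝ)) ⬝ᵥ D1.mulVec (fun j => (Ust i j) ^ 2) = 0 :=
        dot_one_mulVec_zero D1 hD1T _
      have e4 : (fun _ => (1 : ℝ)) ⬝ᵥ
          (fun j => (Ust i j) ^ (2 - 1) * D1.mulVec (Ust i) j) = 0 := by
        have : (fun _ => (1 : ℝ)) ⬝ᵥ
            (fun j => (Ust i j) ^ (2 - 1) * D1.mulVec (Ust i) j)
            = Ust i ⬝ᵥ D1.mulVec (Ust i) := by
          simp [dotProduct]
        rw [this, skew_dot D1 hD1]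
      rw [dotProduct_neg, dotProduct_add, dotProduct_add, dotProduct_smul,
        dotProduct_smul, dotProduct_smul, dotProduct_add, e1, e2, e3, e4]
      simp
    rw [h1] at h2
    exact h2
  have : ∑ j, Uplus j = ∑ j, U j := by
    rw [hUplus]
    simp only [Pi.add_apply, Pi.smul_apply, Finset.sum_apply, smul_eq_mul]
    rw [Finset.sum_add_distrib, ← Finset.mul_sum, Finset.sum_comm]
    simp_rw [← Finset.mul_sum, hKsum]
    simp
  simp only [mul_one]
  rw [this]
end

section
/- Suppose the Runge–Kutta coefficients satisfy the symplectic condition b_i a_{ij} + b_j a_{ji} = b_i b_j for all i, j ∈ {1,…,s}; suppose moreover δ > 0, α > 0, −D₂ is positive semidefinite and D₄ is positive semidefinite. Then one step of Scheme 2.1 is unconditionally stable in the sense that ‖U⁺‖_h² ≤ ⟨A_h U, U⟩_h, so the discrete l² norm of the numerical solution is uniformly bounded by the initial momentum. -/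
open Matrix BigOperators

section aux
variable {N : ℕ}

lemma my_dotProduct_sum {s : ℕ} (u : Fin N → ℝ) (w : Fin s → Fin N → ℝ) :
    u ⬝ᵥ (∑ i, w i) = ∑ i, u ⬝ᵥ w i := by
  simp [dotProduct, Finset.mul_sum]
  exact Finset.sum_comm

lemma skew_pair_s4 (M : Matrix (Fin N) (Fin N) ℝ) (hM : Mᵀ = -M) (v w : Fin N → ℝ) :
    M.mulVec v ⬝ᵥ w + M.mulVec w ⬝ᵥ v = 0 := by
  have : M.mulVec w ⬝ᵥ v = -(M.mulVec v ⬝ᵥ w) := by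
    rw [dotProduct_comm, dotProduct_mulVec, ← mulVec_transpose, hM, neg_mulVec,
      neg_dotProduct]
  rw [this]; ring

lemma skew_self (M : Matrix (Fin N) (Fin N) ℝ) (hM : Mᵀ = -M) (v : Fin N → ℝ) :
    M.mulVec v ⬝ᵥ v = 0 := by
  have := skew_pair_s4 M hM v v; linarith

end aux

/-- Under the symplectic condition, with `δ > 0`, `α > 0`, `-D₂` and
`D₄` positive semidefinite, one step of Scheme 2.1 is unconditionally stable:
`‖U⁺‖_h² ≤ ⟨A_h U, U⟩_h`. -/
theorem scheme21_unconditional_stability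
    (N : ℕ) (hN : 1 ≤ N) (h τ : ℝ) (hh : 0 < h)
    (κ b β : ℝ) (δ α : ℝ) (hδ : 0 < δ) (hα : 0 < α) (p : ℕ) (hp : 2 ≤ p)
    (D1 D2 D3 D4 : Matrix (Fin N) (Fin N) ℝ)
    (hD1 : D1ᵀ = -D1) (hD3 : D3ᵀ = -D3)
    (hD2 : D2ᵀ = D2) (hD4 : D4ᵀ = D4)
    (hD2psd : (-D2).PosSemidef) (hD4psd : D4.PosSemidef)
    (Ah : Matrix (Fin N) (Fin N) ℝ) (hAh : Ah = 1 - δ • D2 + α • D4)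
    (s : ℕ) (hs : 1 ≤ s) (a : Fin s → Fin s → ℝ) (bw : Fin s → ℝ)
    (hsymp : ∀ i j, bw i * a i j + bw j * a j i = bw i * bw j)
    (U Uplus : Fin N → ℝ) (K Ust : Fin s → Fin N → ℝ)
    (hK : ∀ i, Ah.mulVec (K i) =
      -(κ • D1.mulVec (Ust i) + b • D3.mulVec (Ust i)
        + (((p : ℝ) * β) / ((p : ℝ) + 1)) •
          ((fun j => (Ust i j) ^ (p - 1) * D1.mulVec (Ust i) j)
            + D1.mulVec (fun j => (Ust i j) ^ p))))
    (hUst : ∀ i, Ust i = U + τ • ∑ j, a i j • K j)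
    (hUplus : Uplus = U + τ • ∑ i, bw i • K i) :
    h * ∑ j, Uplus j * Uplus j ≤ h * ∑ j, Ah.mulVec U j * U j := by
  classical
  have hQ : ∀ x y : Fin N → ℝ, Ah.mulVec x ⬝ᵥ y = Ah.mulVec x ⬝ᵥ y := fun _ _ => rfl
  set Q : (Fin N → ℝ) → (Fin N → ℝ) → ℝ := fun x y => Ah.mulVec x ⬝ᵥ y with hQdef
  have hAhT : Ahᵀ = Ah := by
    rw [hAh]; simp [transpose_add, transpose_sub, transpose_smul, hD2, hD4]
  have hQsymm : ∀ x y, Q x y = Q y x := by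
    intro x y
    simp only [hQdef]
    rw [dotProduct_comm, dotProduct_mulVec, ← mulVec_transpose, hAhT]
  -- orthogonality: Q (K i) (Ust i) = 0
  have hortho : ∀ i, Q (K i) (Ust i) = 0 := by
    intro i
    have h1 : D1.mulVec (Ust i) ⬝ᵥ (Ust i) = 0 := skew_self D1 hD1 _
    have h3 : D3.mulVec (Ust i) ⬝ᵥ (Ust i) = 0 := skew_self D3 hD3 _
    have h5 : (fun j => (Ust i j) ^ (p - 1) * D1.mulVec (Ust i) j) ⬝ᵥ (Ust i)
        = D1.mulVec (Ust i) ⬝ᵥ (fun j => (Ust i j) ^ p) := by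
      simp only [dotProduct]
      refine Finset.sum_congr rfl fun j _ => ?_
      have hv : (Ust i j) ^ (p - 1) * Ust i j = (Ust i j) ^ p := by
        rw [← pow_succ]; congr 1; omega
      calc ((Ust i j) ^ (p - 1) * D1.mulVec (Ust i) j) * Ust i j
          = D1.mulVec (Ust i) j * ((Ust i j) ^ (p - 1) * Ust i j) := by ring
        _ = D1.mulVec (Ust i) j * (Ust i j) ^ p := by rw [hv]
    have h6 := skew_pair_s4 D1 hD1 (Ust i) (fun j => (Ust i j) ^ p)
    simp only [hQdef]
    rw [hK i]
    simp only [neg_dotProduct, add_dotProduct, smul_dotProduct, smul_eq_mul]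
    rw [h1, h3, h5]
    rw [show D1.mulVec (Ust i) ⬝ᵥ (fun j => (Ust i j) ^ p)
        = -(D1.mulVec (fun j => (Ust i j) ^ p) ⬝ᵥ (Ust i)) by linarith]
    ring
  -- bilinearity expansion in the second argument
  have hexp : ∀ (x y : Fin N → ℝ) (w : Fin s → ℝ),
      Q x (y + τ • ∑ j, w j • K j) = Q x y + τ * ∑ j, w j * Q x (K j) := by
    intro x y w
    simp only [hQdef]
    rw [dotProduct_add, dotProduct_smul,
      my_dotProduct_sum (Ah.mulVec x) (fun j => w j • K j)]
    simp only [dotProduct_smul, smul_eq_mul]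
  have hqsymm : ∀ i j, Q (K i) (K j) = Q (K j) (K i) := fun i j => hQsymm _ _
  -- stage relations
  have hri : ∀ i, Q (K i) U = -(τ * ∑ j, a i j * Q (K i) (K j)) := by
    intro i
    have h0 := hortho i
    rw [hUst i, hexp] at h0
    linarith
  set A : ℝ := ∑ i, ∑ j, bw i * a i j * Q (K i) (K j) with hA
  set B : ℝ := ∑ i, ∑ j, bw i * bw j * Q (K i) (K j) with hB
  have hT : ∑ i, bw i * Q (K i) U = -(τ * A) := by
    have step : ∀ i, bw i * Q (K i) U = -(τ * ∑ j, bw i * a i j * Q (K i) (K j)) := by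
      intro i
      have hmul : bw i * ∑ j, a i j * Q (K i) (K j)
          = ∑ j, bw i * a i j * Q (K i) (K j) := by
        rw [Finset.mul_sum]
        exact Finset.sum_congr rfl fun j _ => by ring
      calc bw i * Q (K i) U = bw i * -(τ * ∑ j, a i j * Q (K i) (K j)) := by rw [hri i]
        _ = -(τ * (bw i * ∑ j, a i j * Q (K i) (K j))) := by ring
        _ = _ := by rw [hmul]
    calc ∑ i, bw i * Q (K i) U
        = ∑ i, -(τ * ∑ j, bw i * a i j * Q (K i) (K j)) :=
          Finset.sum_congr rfl fun i _ => step i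
      _ = -(τ * A) := by rw [Finset.sum_neg_distrib, hA, ← Finset.mul_sum]
  have hzero : B = 2 * A := by
    have h1 : B = ∑ i, ∑ j, (bw i * a i j * Q (K i) (K j)
        + bw j * a j i * Q (K i) (K j)) := by
      rw [hB]
      refine Finset.sum_congr rfl fun i _ => Finset.sum_congr rfl fun j _ => ?_
      rw [← add_mul, hsymp]
    have h2 : ∑ i, ∑ j, bw j * a j i * Q (K i) (K j) = A := by
      rw [Finset.sum_comm, hA]
      exact Finset.sum_congr rfl fun j _ => Finset.sum_congr rfl fun i _ => by
        rw [hqsymm i j]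
    simp only [Finset.sum_add_distrib] at h1
    rw [h1, h2, ← hA]; ring
  -- conservation
  have hqplus : Q Uplus Uplus = Q U U := by
    have e1 : Q Uplus U = Q U U + τ * ∑ i, bw i * Q (K i) U := by
      rw [hQsymm Uplus U, hUplus, hexp]
      congr 2
      exact Finset.sum_congr rfl fun i _ => by rw [hQsymm U (K i)]
    have e2 : ∀ i, Q Uplus (K i)
        = Q (K i) U + τ * ∑ j, bw j * Q (K i) (K j) := by
      intro i
      rw [hQsymm Uplus (K i), hUplus, hexp]
    have e3 : Q Uplus Uplus = Q Uplus U + τ * ∑ i, bw i * Q Uplus (K i) := by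
      conv_lhs => rw [show Q Uplus Uplus = Q Uplus (U + τ • ∑ i, bw i • K i) by
        rw [← hUplus]]
      exact hexp Uplus U bw
    have e4 : ∑ i, bw i * Q Uplus (K i)
        = (∑ i, bw i * Q (K i) U) + τ * B := by
      have step : ∀ i, bw i * Q Uplus (K i)
          = bw i * Q (K i) U + τ * ∑ j, bw i * bw j * Q (K i) (K j) := by
        intro i
        rw [e2 i, mul_add]
        congr 1
        simp only [Finset.mul_sum]
        exact Finset.sum_congr rfl fun j _ => by ring
      calc ∑ i, bw i * Q Uplus (K i)
          = ∑ i, (bw i * Q (K i) U + τ * ∑ j, bw i * bw j * Q (K i) (K j)) :=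
            Finset.sum_congr rfl fun i _ => step i
        _ = (∑ i, bw i * Q (K i) U) + τ * B := by
            rw [Finset.sum_add_distrib, hB, ← Finset.mul_sum]
    rw [e3, e1, e4, hT, hzero]
    ring
  -- positivity: v ⬝ᵥ v ≤ Q v v
  have hlow : ∀ v : Fin N → ℝ, v ⬝ᵥ v ≤ Q v v := by
    intro v
    have h2 := hD2psd.dotProduct_mulVec_nonneg v
    have h4 := hD4psd.dotProduct_mulVec_nonneg v
    simp only [star_trivial] at h2 h4
    rw [neg_mulVec, dotProduct_neg] at h2
    have hc2 : D2.mulVec v ⬝ᵥ v = v ⬝ᵥ D2.mulVec v := dotProduct_comm _ _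
    have hc4 : D4.mulVec v ⬝ᵥ v = v ⬝ᵥ D4.mulVec v := dotProduct_comm _ _
    have expand : Q v v = v ⬝ᵥ v - δ * (D2.mulVec v ⬝ᵥ v) + α * (D4.mulVec v ⬝ᵥ v) := by
      simp only [hQdef, hAh]
      rw [add_mulVec, sub_mulVec, one_mulVec, smul_mulVec, smul_mulVec]
      simp only [add_dotProduct, sub_dotProduct, smul_dotProduct, smul_eq_mul]
    rw [expand, hc2, hc4]
    nlinarith [mul_nonneg hδ.le h2, mul_nonneg hα.le h4]
  -- conclusion
  have hfin : Uplus ⬝ᵥ Uplus ≤ Q U U := le_of_le_of_eq (hlow Uplus) hqplus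
  have : h * (Uplus ⬝ᵥ Uplus) ≤ h * (Ah.mulVec U ⬝ᵥ U) :=
    mul_le_mul_of_nonneg_left hfin hh.le
  exact this
end

section
/- Suppose the Runge–Kutta coefficients satisfy the symplectic condition b_i a_{ij} + b_j a_{ji} = b_i b_j for all i, j ∈ {1,…,s}. Then one step of Scheme 2.2 conserves the quadratic auxiliary invariant: Q⁺ − (U⁺)² = Q − U² (componentwise). In particular, if Q = U² then Q⁺ = (U⁺)². -/
open Matrix BigOperators

lemma scheme22_key_sum {s : ℕ} (a : Fin s → Fin s → ℝ) (bw k : Fin s → ℝ)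
    (hsymp : ∀ i j, bw i * a i j + bw j * a j i = bw i * bw j) :
    2 * ∑ i, bw i * k i * (∑ l, a i l * k l)
      = (∑ i, bw i * k i) ^ 2 := by
  have hd : ∑ i, bw i * k i * (∑ l, a i l * k l)
      = ∑ i, ∑ l, bw i * a i l * k i * k l := by
    apply Finset.sum_congr rfl
    intro i _
    rw [Finset.mul_sum]
    exact Finset.sum_congr rfl fun l _ => by ring
  have hswap : (∑ i, ∑ l, bw i * a i l * k i * k l)
      = ∑ i, ∑ l, bw l * a l i * k l * k i := Finset.sum_comm
  have h2 : 2 * ∑ i, ∑ l, bw i * a i l * k i * k l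
      = ∑ i, ∑ l, (bw i * bw l) * (k i * k l) := by
    rw [two_mul]
    nth_rewrite 2 [hswap]
    rw [← Finset.sum_add_distrib]
    apply Finset.sum_congr rfl
    intro i _
    rw [← Finset.sum_add_distrib]
    apply Finset.sum_congr rfl
    intro l _
    linear_combination (k i * k l) * hsymp i l
  rw [hd, h2, sq, Finset.sum_mul_sum]
  apply Finset.sum_congr rfl
  intro i _
  apply Finset.sum_congr rfl
  intro l _
  ring

/-- Under the symplectic condition, one step of Scheme 2.2 conserves
the quadratic auxiliary invariant: `Q⁺ − (U⁺)² = Q − U²` componentwise; in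
particular, if `Q = U²` then `Q⁺ = (U⁺)²`. -/
theorem scheme22_auxiliary_invariant
    (N : ℕ) (hN : 1 ≤ N) (h τ : ℝ) (hh : 0 < h)
    (κ δ b α β : ℝ)
    (D1 D2 D4 : Matrix (Fin N) (Fin N) ℝ)
    (hD1 : D1ᵀ = -D1) (hD2 : D2ᵀ = D2) (hD4 : D4ᵀ = D4)
    (Ah : Matrix (Fin N) (Fin N) ℝ) (hAh : Ah = 1 - δ • D2 + α • D4)
    (hAhinv : IsUnit Ah)
    (hcomm2 : D1 * D2 = D2 * D1) (hcomm4 : D1 * D4 = D4 * D1)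
    (Jh : Matrix (Fin N) (Fin N) ℝ) (hJh : Jh = -(Ah⁻¹ * D1))
    (s : ℕ) (hs : 1 ≤ s) (a : Fin s → Fin s → ℝ) (bw : Fin s → ℝ)
    (hsymp : ∀ i j, bw i * a i j + bw j * a j i = bw i * bw j)
    (U Q Uplus Qplus : Fin N → ℝ) (K L Ust Qst : Fin s → Fin N → ℝ)
    (hK : ∀ i, K i = Jh.mulVec
      (κ • Ust i + b • D2.mulVec (Ust i)
        + (β / 3) • (Qst i + 2 • fun j => (Ust i j) ^ 2)))
    (hUst : ∀ i, Ust i = U + τ • ∑ j, a i j • K j)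
    (hQst : ∀ i, Qst i = Q + τ • ∑ j, a i j • L j)
    (hL : ∀ i, L i = 2 • fun j => Ust i j * K i j)
    (hUplus : Uplus = U + τ • ∑ i, bw i • K i)
    (hQplus : Qplus = Q + τ • ∑ i, bw i • L i) :
    (∀ j, Qplus j - (Uplus j) ^ 2 = Q j - (U j) ^ 2)
      ∧ ((∀ j, Q j = (U j) ^ 2) → ∀ j, Qplus j = (Uplus j) ^ 2) := by
  have hmain : ∀ j, Qplus j - (Uplus j) ^ 2 = Q j - (U j) ^ 2 := by
    intro j
    have hU' : Uplus j = U j + τ * ∑ i, bw i * K i j := by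
      simp [hUplus, Finset.sum_apply]
    have hL' : ∀ i, L i j = 2 * (Ust i j * K i j) := by
      intro i
      simp [hL]
    have hQ' : Qplus j = Q j + τ * ∑ i, bw i * (2 * (Ust i j * K i j)) := by
      simp [hQplus, Finset.sum_apply, hL']
    have hUst' : ∀ i, Ust i j = U j + τ * ∑ l, a i l * K l j := by
      intro i
      simp [hUst, Finset.sum_apply]
    have hS : ∑ i, bw i * (2 * (Ust i j * K i j))
        = 2 * U j * (∑ i, bw i * K i j)
          + 2 * τ * ∑ i, bw i * K i j * (∑ l, a i l * K l j) := by
      have : ∀ i : Fin s, bw i * (2 * (Ust i j * K i j))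
          = 2 * U j * (bw i * K i j)
            + 2 * τ * (bw i * K i j * (∑ l, a i l * K l j)) := by
        intro i
        rw [hUst' i]; ring
      rw [Finset.sum_congr rfl fun i _ => this i, Finset.sum_add_distrib,
        ← Finset.mul_sum, ← Finset.mul_sum]
    have hkey := scheme22_key_sum a bw (fun i => K i j) hsymp
    rw [hQ', hU', hS]
    linear_combination τ ^ 2 * hkey
  exact ⟨hmain, fun hQU j => by have := hmain j; rw [hQU j] at this; linarith⟩
end

section
/- Suppose the Runge–Kutta coefficients satisfy the symplectic condition b_i a_{ij} + b_j a_{ji} = b_i b_j for all i, j ∈ {1,…,s}. Then one step of Scheme 2.2 conserves the discrete quadratized energy E_h(U,Q) = (κ/2)⟨U,U⟩_h + (b/2)⟨D₂U, U⟩_h + (β/3)⟨U, Q⟩_h; that is, E_h(U⁺, Q⁺) = E_h(U, Q). -/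
open Matrix BigOperators

lemma skew_dot_s6 {n : ℕ} (A : Matrix (Fin n) (Fin n) ℝ) (hA : Aᵀ = -A) (v : Fin n → ℝ) :
    v ⬝ᵥ A.mulVec v = 0 := by
  have h1 : v ⬝ᵥ A.mulVec v = A.vecMul v ⬝ᵥ v := Matrix.dotProduct_mulVec v A v
  have h2 : A.vecMul v = Aᵀ.mulVec v := (Matrix.mulVec_transpose A v).symm
  rw [h2, hA, Matrix.neg_mulVec] at h1
  have h3 : (-(A.mulVec v)) ⬝ᵥ v = -(v ⬝ᵥ A.mulVec v) := by
    rw [neg_dotProduct, dotProduct_comm]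
  rw [h3] at h1
  linarith

noncomputable def Bform (n : ℕ) (κ b β : ℝ) (D2 : Matrix (Fin n) (Fin n) ℝ) :
    ((Fin n → ℝ) × (Fin n → ℝ)) →ₗ[ℝ] ((Fin n → ℝ) × (Fin n → ℝ)) →ₗ[ℝ] ℝ :=
  LinearMap.mk₂ ℝ (fun X Y => κ * (X.1 ⬝ᵥ Y.1) + b * (D2.mulVec X.1 ⬝ᵥ Y.1)
      + (β/3) * (X.1 ⬝ᵥ Y.2 + Y.1 ⬝ᵥ X.2))
    (by intro X X' Y
        simp [add_dotProduct, dotProduct_add, Matrix.mulVec_add]; ring)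
    (by intro c X Y
        simp [smul_dotProduct, dotProduct_smul, Matrix.mulVec_smul,
          smul_eq_mul]; ring)
    (by intro X Y Y'
        simp [add_dotProduct, dotProduct_add, Matrix.mulVec_add]; ring)
    (by intro c X Y
        simp [smul_dotProduct, dotProduct_smul, smul_eq_mul]; ring)

lemma Bform_apply (n : ℕ) (κ b β : ℝ) (D2 : Matrix (Fin n) (Fin n) ℝ)
    (X Y : (Fin n → ℝ) × (Fin n → ℝ)) :
    Bform n κ b β D2 X Y = κ * (X.1 ⬝ᵥ Y.1) + b * (D2.mulVec X.1 ⬝ᵥ Y.1)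
      + (β/3) * (X.1 ⬝ᵥ Y.2 + Y.1 ⬝ᵥ X.2) := rfl

lemma Bform_symm (n : ℕ) (κ b β : ℝ) (D2 : Matrix (Fin n) (Fin n) ℝ) (hD2 : D2ᵀ = D2)
    (X Y : (Fin n → ℝ) × (Fin n → ℝ)) :
    Bform n κ b β D2 X Y = Bform n κ b β D2 Y X := by
  have hmv : D2.mulVec X.1 ⬝ᵥ Y.1 = D2.mulVec Y.1 ⬝ᵥ X.1 := by
    rw [dotProduct_comm, Matrix.dotProduct_mulVec, ← Matrix.mulVec_transpose, hD2]
  rw [Bform_apply, Bform_apply, hmv, dotProduct_comm X.1 Y.1]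
  ring

/-- Under the symplectic condition, one step of Scheme 2.2 conserves
the discrete quadratized energy
`E_h(U,Q) = (κ/2)⟨U,U⟩_h + (b/2)⟨D₂U,U⟩_h + (β/3)⟨U,Q⟩_h`. -/
theorem scheme22_quadratized_energy_conservation
    (N : ℕ) (hN : 1 ≤ N) (h τ : ℝ) (hh : 0 < h)
    (κ δ b α β : ℝ)
    (D1 D2 D4 : Matrix (Fin N) (Fin N) ℝ)
    (hD1 : D1ᵀ = -D1) (hD2 : D2ᵀ = D2) (hD4 : D4ᵀ = D4)
    (Ah : Matrix (Fin N) (Fin N) ℝ) (hAh : Ah = 1 - δ • D2 + α • D4)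
    (hAhinv : IsUnit Ah)
    (hcomm2 : D1 * D2 = D2 * D1) (hcomm4 : D1 * D4 = D4 * D1)
    (Jh : Matrix (Fin N) (Fin N) ℝ) (hJh : Jh = -(Ah⁻¹ * D1))
    (s : ℕ) (hs : 1 ≤ s) (a : Fin s → Fin s → ℝ) (bw : Fin s → ℝ)
    (hsymp : ∀ i j, bw i * a i j + bw j * a j i = bw i * bw j)
    (U Q Uplus Qplus : Fin N → ℝ) (K L Ust Qst : Fin s → Fin N → ℝ)
    (hK : ∀ i, K i = Jh.mulVec
      (κ • Ust i + b • D2.mulVec (Ust i)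
        + (β / 3) • (Qst i + 2 • fun j => (Ust i j) ^ 2)))
    (hUst : ∀ i, Ust i = U + τ • ∑ j, a i j • K j)
    (hQst : ∀ i, Qst i = Q + τ • ∑ j, a i j • L j)
    (hL : ∀ i, L i = 2 • fun j => Ust i j * K i j)
    (hUplus : Uplus = U + τ • ∑ i, bw i • K i)
    (hQplus : Qplus = Q + τ • ∑ i, bw i • L i) :
    (κ / 2) * (h * ∑ j, Uplus j * Uplus j)
        + (b / 2) * (h * ∑ j, D2.mulVec Uplus j * Uplus j)
        + (β / 3) * (h * ∑ j, Uplus j * Qplus j)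
      = (κ / 2) * (h * ∑ j, U j * U j)
        + (b / 2) * (h * ∑ j, D2.mulVec U j * U j)
        + (β / 3) * (h * ∑ j, U j * Q j) := by
  -- Jh is skew-symmetric
  have hdet := (Matrix.isUnit_iff_isUnit_det Ah).mp hAhinv
  have hinv1 : Ah * Ah⁻¹ = 1 := Matrix.mul_nonsing_inv Ah hdet
  have hinv2 : Ah⁻¹ * Ah = 1 := Matrix.nonsing_inv_mul Ah hdet
  have hAhT : Ahᵀ = Ah := by
    rw [hAh]; simp [Matrix.transpose_add, Matrix.transpose_sub, Matrix.transpose_smul, hD2, hD4]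
  have hcommAh : D1 * Ah = Ah * D1 := by
    rw [hAh]
    simp only [Matrix.mul_sub, Matrix.sub_mul, Matrix.mul_add, Matrix.add_mul,
      Matrix.mul_smul, Matrix.smul_mul, Matrix.mul_one, Matrix.one_mul, hcomm2, hcomm4]
  have hcommInv : Ah⁻¹ * D1 = D1 * Ah⁻¹ := by
    calc Ah⁻¹ * D1 = Ah⁻¹ * D1 * (Ah * Ah⁻¹) := by rw [hinv1, mul_one]
    _ = Ah⁻¹ * (D1 * Ah) * Ah⁻¹ := by simp only [Matrix.mul_assoc]
    _ = Ah⁻¹ * Ah * D1 * Ah⁻¹ := by rw [hcommAh]; simp only [Matrix.mul_assoc]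
    _ = D1 * Ah⁻¹ := by rw [hinv2, Matrix.one_mul]
  have hinvT : (Ah⁻¹)ᵀ = Ah⁻¹ := by rw [Matrix.transpose_nonsing_inv, hAhT]
  have hJhT : Jhᵀ = -Jh := by
    rw [hJh, Matrix.transpose_neg, Matrix.transpose_mul, hinvT, hD1, Matrix.neg_mul,
      neg_neg, neg_neg, hcommInv]
  have hJskew : ∀ v : Fin N → ℝ, v ⬝ᵥ Jh.mulVec v = 0 := skew_dot_s6 Jh hJhT
  set B := Bform N κ b β D2 with hBdef
  have hBsymm : ∀ X Y, B X Y = B Y X := Bform_symm N κ b β D2 hD2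
  -- stage identity : B (Xs i) (Xd i) = 0
  have hstage : ∀ i, B (Ust i, Qst i) (K i, L i) = 0 := by
    intro i
    have harg : (κ • Ust i + b • D2.mulVec (Ust i)
          + (β / 3) • (Qst i + 2 • fun j => (Ust i j) ^ 2))
        = (fun j => κ * Ust i j + b * D2.mulVec (Ust i) j
            + (β/3) * (Qst i j + 2 * (Ust i j)^2)) := by
      funext j
      simp only [Pi.add_apply, Pi.smul_apply, smul_eq_mul, nsmul_eq_mul, Nat.cast_ofNat, Pi.mul_apply, Pi.ofNat_apply]
    have hKi : K i = Jh.mulVec (fun j => κ * Ust i j + b * D2.mulVec (Ust i) j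
        + (β/3) * (Qst i j + 2 * (Ust i j)^2)) := by
      rw [hK i, harg]
    have hF : B (Ust i, Qst i) (K i, L i)
        = (fun j => κ * Ust i j + b * D2.mulVec (Ust i) j
            + (β/3) * (Qst i j + 2 * (Ust i j)^2)) ⬝ᵥ K i := by
      rw [hBdef, Bform_apply]
      simp only [dotProduct, hL i, Pi.smul_apply, smul_eq_mul, nsmul_eq_mul,
        Nat.cast_ofNat]
      rw [Finset.mul_sum, Finset.mul_sum, mul_add, Finset.mul_sum, Finset.mul_sum,
        ← Finset.sum_add_distrib, ← Finset.sum_add_distrib, ← Finset.sum_add_distrib]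
      exact Finset.sum_congr rfl fun j _ => by ring
    rw [hF, hKi]
    exact hJskew _
  -- expansion lemma
  have hexp : ∀ (c : Fin s → ℝ) (W : (Fin N → ℝ) × (Fin N → ℝ)),
      B ((U, Q) + τ • ∑ j, c j • ((K j, L j) : (Fin N → ℝ) × (Fin N → ℝ))) W
        = B (U, Q) W + τ * ∑ j, c j * B (K j, L j) W := by
    intro c W
    simp only [map_add, LinearMap.map_smul, map_sum, LinearMap.add_apply,
      LinearMap.smul_apply, LinearMap.sum_apply, smul_eq_mul]
  have hXs : ∀ i, ((Ust i, Qst i) : (Fin N → ℝ) × (Fin N → ℝ))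
      = (U, Q) + τ • ∑ j, a i j • ((K j, L j) : (Fin N → ℝ) × (Fin N → ℝ)) := by
    intro i
    have h1 : (∑ j, a i j • ((K j, L j) : (Fin N → ℝ) × (Fin N → ℝ)))
        = (∑ j, a i j • K j, ∑ j, a i j • L j) := by
      ext <;> simp [Prod.fst_sum, Prod.snd_sum]
    rw [h1, Prod.smul_mk, Prod.mk_add_mk, hUst i, hQst i]
  have hXp : ((Uplus, Qplus) : (Fin N → ℝ) × (Fin N → ℝ))
      = (U, Q) + τ • ∑ i, bw i • ((K i, L i) : (Fin N → ℝ) × (Fin N → ℝ)) := by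
    have h1 : (∑ i, bw i • ((K i, L i) : (Fin N → ℝ) × (Fin N → ℝ)))
        = (∑ i, bw i • K i, ∑ i, bw i • L i) := by
      ext <;> simp [Prod.fst_sum, Prod.snd_sum]
    rw [h1, Prod.smul_mk, Prod.mk_add_mk, hUplus, hQplus]
  -- stage expansion
  have h2 : ∀ i, B (Ust i, Qst i) (K i, L i)
      = B (K i, L i) (U, Q) + τ * ∑ j, a i j * B (K j, L j) (K i, L i) := by
    intro i
    rw [hXs i, hexp (a i) (K i, L i), hBsymm (U, Q) (K i, L i)]
  -- key identity from the stage invariance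
  have hkey : (∑ i, bw i * B (K i, L i) (U, Q))
      = - ∑ i, ∑ j, bw i * (τ * (a i j * B (K j, L j) (K i, L i))) := by
    have h0 : ∑ i, bw i * B (Ust i, Qst i) (K i, L i) = 0 := by simp [hstage]
    have h0' : (∑ i, (bw i * B (K i, L i) (U, Q)
        + ∑ j, bw i * (τ * (a i j * B (K j, L j) (K i, L i))))) = 0 := by
      rw [← h0]
      refine Finset.sum_congr rfl fun i _ => ?_
      rw [h2 i, mul_add]
      congr 1
      rw [Finset.mul_sum, Finset.mul_sum]
    rw [Finset.sum_add_distrib] at h0'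
    linarith
  -- symplectic double-sum identity
  have hdd : ∑ i, ∑ j, bw i * (τ * (bw j * B (K j, L j) (K i, L i)))
      = 2 * ∑ i, ∑ j, bw i * (τ * (a i j * B (K j, L j) (K i, L i))) := by
    have hsplit : ∑ i, ∑ j, bw i * (τ * (bw j * B (K j, L j) (K i, L i)))
        = ∑ i, ∑ j, (bw i * (τ * (a i j * B (K j, L j) (K i, L i)))
            + bw j * (τ * (a j i * B (K j, L j) (K i, L i)))) := by
      refine Finset.sum_congr rfl fun i _ => Finset.sum_congr rfl fun j _ => ?_
      linear_combination (-(τ * B (K j, L j) (K i, L i))) * (hsymp i j)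
    have hsw : ∑ i, ∑ j, bw j * (τ * (a j i * B (K j, L j) (K i, L i)))
        = ∑ i, ∑ j, bw i * (τ * (a i j * B (K j, L j) (K i, L i))) := by
      rw [Finset.sum_comm]
      refine Finset.sum_congr rfl fun i _ => Finset.sum_congr rfl fun j _ => ?_
      rw [hBsymm (K j, L j) (K i, L i)]
    rw [hsplit]
    simp only [Finset.sum_add_distrib]
    rw [hsw]
    ring
  -- expansion of the new step
  have hq : ∑ i, bw i * (B (K i, L i) (U, Q)
        + τ * ∑ j, bw j * B (K j, L j) (K i, L i))
      = (∑ i, bw i * B (K i, L i) (U, Q))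
        + ∑ i, ∑ j, bw i * (τ * (bw j * B (K j, L j) (K i, L i))) := by
    rw [← Finset.sum_add_distrib]
    refine Finset.sum_congr rfl fun i _ => ?_
    rw [mul_add]
    congr 1
    rw [Finset.mul_sum, Finset.mul_sum]
  have hA1 : B ((Uplus, Qplus)) ((Uplus, Qplus))
      = B (U, Q) (U, Q) + τ * (∑ i, bw i * B (K i, L i) (U, Q))
        + τ * ∑ i, bw i * (B (K i, L i) (U, Q)
            + τ * ∑ j, bw j * B (K j, L j) (K i, L i)) := by
    rw [hXp, hexp bw]
    congr 1
    · rw [hBsymm, hexp bw (U, Q)]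
    · congr 1
      refine Finset.sum_congr rfl fun i _ => ?_
      congr 1
      rw [hBsymm (K i, L i), hexp bw (K i, L i), hBsymm (U, Q) (K i, L i)]
  have hBeq : B ((Uplus, Qplus)) ((Uplus, Qplus)) = B (U, Q) (U, Q) := by
    rw [hA1, hq, hkey]
    rw [hdd]
    ring
  simp only [hBdef, Bform_apply, dotProduct] at hBeq
  linear_combination (h / 2) * hBeq
end

section
/- Assume D₁𝟙 = D₂𝟙 = D₄𝟙 = 0. Then for ANY Runge–Kutta coefficients (no symplectic condition required), one step of Scheme 2.2 conserves the discrete mass: ⟨U⁺, 𝟙⟩_h = ⟨U, 𝟙⟩_h. -/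
open Matrix BigOperators

/-- If `D₁𝟙 = D₂𝟙 = D₄𝟙 = 0`, then for ANY Runge–Kutta coefficients,
one step of Scheme 2.2 conserves the discrete mass `⟨U, 𝟙⟩_h`. -/
theorem scheme22_mass_conservation
    (N : ℕ) (hN : 1 ≤ N) (h τ : ℝ) (hh : 0 < h)
    (κ δ b α β : ℝ)
    (D1 D2 D4 : Matrix (Fin N) (Fin N) ℝ)
    (hD1 : D1ᵀ = -D1) (hD2 : D2ᵀ = D2) (hD4 : D4ᵀ = D4)
    (hD1one : D1.mulVec (fun _ => (1 : ℝ)) = 0)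
    (hD2one : D2.mulVec (fun _ => (1 : ℝ)) = 0)
    (hD4one : D4.mulVec (fun _ => (1 : ℝ)) = 0)
    (Ah : Matrix (Fin N) (Fin N) ℝ) (hAh : Ah = 1 - δ • D2 + α • D4)
    (hAhinv : IsUnit Ah)
    (hcomm2 : D1 * D2 = D2 * D1) (hcomm4 : D1 * D4 = D4 * D1)
    (Jh : Matrix (Fin N) (Fin N) ℝ) (hJh : Jh = -(Ah⁻¹ * D1))
    (s : ℕ) (hs : 1 ≤ s) (a : Fin s → Fin s → ℝ) (bw : Fin s → ℝ)
    (U Q Uplus Qplus : Fin N → ℝ) (K L Ust Qst : Fin s → Fin N → ℝ)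
    (hK : ∀ i, K i = Jh.mulVec
      (κ • Ust i + b • D2.mulVec (Ust i)
        + (β / 3) • (Qst i + 2 • fun j => (Ust i j) ^ 2)))
    (hUst : ∀ i, Ust i = U + τ • ∑ j, a i j • K j)
    (hQst : ∀ i, Qst i = Q + τ • ∑ j, a i j • L j)
    (hL : ∀ i, L i = 2 • fun j => Ust i j * K i j)
    (hUplus : Uplus = U + τ • ∑ i, bw i • K i)
    (hQplus : Qplus = Q + τ • ∑ i, bw i • L i) :
    h * ∑ j, Uplus j * 1 = h * ∑ j, U j * 1 := by
  -- Ah is symmetric and fixes 𝟙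
  have hAhsym : Ahᵀ = Ah := by
    rw [hAh]; simp [Matrix.transpose_add, Matrix.transpose_sub, hD2, hD4]
  have hAhone : Ah.mulVec (fun _ => (1 : ℝ)) = (fun _ => (1 : ℝ)) := by
    rw [hAh]
    simp [Matrix.add_mulVec, Matrix.sub_mulVec, Matrix.smul_mulVec,
      hD2one, hD4one]
  have hAinvone : Ah⁻¹.mulVec (fun _ => (1 : ℝ)) = (fun _ => (1 : ℝ)) := by
    calc Ah⁻¹.mulVec (fun _ => (1 : ℝ))
        = Ah⁻¹.mulVec (Ah.mulVec (fun _ => (1 : ℝ))) := by rw [hAhone]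
      _ = (Ah⁻¹ * Ah).mulVec (fun _ => (1 : ℝ)) := by rw [Matrix.mulVec_mulVec]
      _ = (fun _ => (1 : ℝ)) := by
          rw [Matrix.nonsing_inv_mul Ah
            ((Matrix.isUnit_iff_isUnit_det Ah).mp hAhinv), Matrix.one_mulVec]
  have hJhT : Jhᵀ.mulVec (fun _ => (1 : ℝ)) = 0 := by
    rw [hJh]
    rw [Matrix.transpose_neg, Matrix.transpose_mul, hD1,
      Matrix.transpose_nonsing_inv, hAhsym]
    rw [Matrix.neg_mul, neg_neg, ← Matrix.mulVec_mulVec, hAinvone, hD1one]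
  -- each K i sums to zero
  have hKsum : ∀ i, ∑ j, K i j = 0 := by
    intro i
    rw [Matrix.mulVec_transpose] at hJhT
    rw [hK i]
    have h1 : ∀ v : Fin N → ℝ, ∑ j, (Jh.mulVec v) j
        = (fun _ => (1 : ℝ)) ⬝ᵥ (Jh.mulVec v) := by
      intro v; simp [dotProduct]
    rw [h1, Matrix.dotProduct_mulVec, hJhT, zero_dotProduct]
  have : ∑ j, Uplus j = ∑ j, U j := by
    rw [hUplus]
    simp only [Pi.add_apply, Pi.smul_apply, Finset.sum_apply, smul_eq_mul,
      Finset.sum_add_distrib, Finset.mul_sum]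
    rw [Finset.sum_comm]
    simp [hKsum, ← Finset.mul_sum]
  simp only [mul_one, this]
end

section
/- Let (u, q) be a smooth solution of the quadratic-auxiliary-variable reformulation (case p = 2) of the generalized Rosenau-type equation, L-periodic in x. Then the quadratized energy H(t) = ∫₀ᴸ ( (κ/2)u(x,t)² − (b/2)(∂_x u(x,t))² + (β/3) u(x,t) q(x,t) ) dx is constant in t. -/
noncomputable def pdx (U : ℝ × ℝ → ℝ) : ℝ × ℝ → ℝ := fun z => fderiv ℝ U z (1, 0)
noncomputable def pdt (U : ℝ × ℝ → ℝ) : ℝ × ℝ → ℝ := fun z => fderiv ℝ U z (0, 1)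

lemma contDiff_pdx {U : ℝ × ℝ → ℝ} (h : ContDiff ℝ (⊤ : ℕ∞) U) : ContDiff ℝ (⊤ : ℕ∞) (pdx U) :=
  (ContinuousLinearMap.apply ℝ ℝ ((1:ℝ), (0:ℝ))).contDiff.comp
    (h.fderiv_right (m := (⊤ : ℕ∞)) (by simp))

lemma contDiff_pdt {U : ℝ × ℝ → ℝ} (h : ContDiff ℝ (⊤ : ℕ∞) U) : ContDiff ℝ (⊤ : ℕ∞) (pdt U) :=
  (ContinuousLinearMap.apply ℝ ℝ ((0:ℝ), (1:ℝ))).contDiff.comp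
    (h.fderiv_right (m := (⊤ : ℕ∞)) (by simp))

lemma hasDerivAt_pdx {U : ℝ × ℝ → ℝ} (h : ContDiff ℝ (⊤ : ℕ∞) U) (x t : ℝ) :
    HasDerivAt (fun y => U (y, t)) (pdx U (x, t)) x := by
  have h1 : HasDerivAt (fun y : ℝ => (y, t)) ((1:ℝ), (0:ℝ)) x := by
    simpa using (hasDerivAt_id x).prodMk (hasDerivAt_const x t)
  exact ((h.differentiable (by simp) (x, t)).hasFDerivAt.comp_hasDerivAt x h1)

lemma hasDerivAt_pdt {U : ℝ × ℝ → ℝ} (h : ContDiff ℝ (⊤ : ℕ∞) U) (x t : ℝ) :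
    HasDerivAt (fun s => U (x, s)) (pdt U (x, t)) t := by
  have h1 : HasDerivAt (fun s : ℝ => (x, s)) ((0:ℝ), (1:ℝ)) t := by
    simpa using (hasDerivAt_const t x).prodMk (hasDerivAt_id t)
  exact ((h.differentiable (by simp) (x, t)).hasFDerivAt.comp_hasDerivAt t h1)

lemma deriv_pdx {U : ℝ × ℝ → ℝ} (h : ContDiff ℝ (⊤ : ℕ∞) U) (x t : ℝ) :
    deriv (fun y => U (y, t)) x = pdx U (x, t) := (hasDerivAt_pdx h x t).deriv

lemma deriv_pdt {U : ℝ × ℝ → ℝ} (h : ContDiff ℝ (⊤ : ℕ∞) U) (x t : ℝ) :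
    deriv (fun s => U (x, s)) t = pdt U (x, t) := (hasDerivAt_pdt h x t).deriv

lemma pdx_pdt_comm {U : ℝ × ℝ → ℝ} (h : ContDiff ℝ (⊤ : ℕ∞) U) (z : ℝ × ℝ) :
    pdx (pdt U) z = pdt (pdx U) z := by
  have hsym : IsSymmSndFDerivAt ℝ U z := (h.contDiffAt).isSymmSndFDerivAt (by
    rw [minSmoothness_of_isRCLikeNormedField]; exact WithTop.coe_le_coe.mpr le_top)
  have hd : DifferentiableAt ℝ (fderiv ℝ U) z :=
    ((h.fderiv_right (m := (⊤ : ℕ∞)) (by simp)).differentiable (by simp)) z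
  have h1 : pdt U = fun w => (ContinuousLinearMap.apply ℝ ℝ ((0:ℝ),(1:ℝ))) (fderiv ℝ U w) := rfl
  have h2 : pdx U = fun w => (ContinuousLinearMap.apply ℝ ℝ ((1:ℝ),(0:ℝ))) (fderiv ℝ U w) := rfl
  have e1 : pdx (pdt U) z = fderiv ℝ (fderiv ℝ U) z (1,0) (0,1) := by
    have H : HasFDerivAt (pdt U)
        ((ContinuousLinearMap.apply ℝ ℝ ((0:ℝ),(1:ℝ))).comp (fderiv ℝ (fderiv ℝ U) z)) z :=
      ((ContinuousLinearMap.apply ℝ ℝ ((0:ℝ),(1:ℝ))).hasFDerivAt).comp z hd.hasFDerivAt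
    show fderiv ℝ (pdt U) z (1,0) = _
    rw [H.fderiv]; rfl
  have e2 : pdt (pdx U) z = fderiv ℝ (fderiv ℝ U) z (0,1) (1,0) := by
    have H : HasFDerivAt (pdx U)
        ((ContinuousLinearMap.apply ℝ ℝ ((1:ℝ),(0:ℝ))).comp (fderiv ℝ (fderiv ℝ U) z)) z :=
      ((ContinuousLinearMap.apply ℝ ℝ ((1:ℝ),(0:ℝ))).hasFDerivAt).comp z hd.hasFDerivAt
    show fderiv ℝ (pdx U) z (0,1) = _
    rw [H.fderiv]; rfl
  rw [e1, e2, hsym.eq]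

lemma iteratedDeriv_pdx {U : ℝ × ℝ → ℝ} (h : ContDiff ℝ (⊤ : ℕ∞) U) (n : ℕ) (x t : ℝ) :
    iteratedDeriv n (fun y => U (y, t)) x = (pdx^[n] U) (x, t) := by
  induction n generalizing U with
  | zero => simp
  | succ n ih =>
      rw [iteratedDeriv_succ']
      have : deriv (fun y => U (y, t)) = fun y => pdx U (y, t) :=
        funext fun y => deriv_pdx h y t
      rw [this, ih (contDiff_pdx h), ← Function.iterate_succ_apply]

lemma pdx_periodic {U : ℝ × ℝ → ℝ} {L : ℝ} (h : ContDiff ℝ (⊤ : ℕ∞) U)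
    (hper : ∀ x t, U (x + L, t) = U (x, t)) : ∀ x t, pdx U (x + L, t) = pdx U (x, t) := by
  intro x t
  have hfun : (fun y => U (y + L, t)) = fun y => U (y, t) := funext fun y => hper y t
  calc pdx U (x + L, t) = deriv (fun y => U (y, t)) (x + L) := (deriv_pdx h _ t).symm
    _ = deriv (fun y => U (y + L, t)) x :=
        (deriv_comp_add_const (fun y => U (y, t)) L x).symm
    _ = pdx U (x, t) := by rw [hfun]; exact deriv_pdx h x t

lemma pdt_periodic {U : ℝ × ℝ → ℝ} {L : ℝ} (h : ContDiff ℝ (⊤ : ℕ∞) U)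
    (hper : ∀ x t, U (x + L, t) = U (x, t)) : ∀ x t, pdt U (x + L, t) = pdt U (x, t) := by
  intro x t
  have hfun : (fun s => U (x + L, s)) = fun s => U (x, s) := funext fun s => hper x s
  calc pdt U (x + L, t) = deriv (fun s => U (x + L, s)) t := (deriv_pdt h _ t).symm
    _ = pdt U (x, t) := by rw [hfun]; exact deriv_pdt h x t

noncomputable def Gfun (κ b β : ℝ) (U Q : ℝ × ℝ → ℝ) : ℝ × ℝ → ℝ := fun z =>
  κ * U z + b * pdx (pdx U) z + β/3 * Q z + 2*β/3 * (U z)^2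

noncomputable def Pfun (κ b β : ℝ) (U Q : ℝ × ℝ → ℝ) : ℝ × ℝ → ℝ := fun z =>
  κ * U z * pdt U z - b * (pdx U z * pdx (pdt U) z)
    + β/3 * (pdt U z * Q z + 2 * (U z)^2 * pdt U z)

noncomputable def Ffun (κ b β δ α : ℝ) (U Q : ℝ × ℝ → ℝ) : ℝ × ℝ → ℝ := fun z =>
  (-b) * (pdx U z * pdt U z) - 1/2 * (Gfun κ b β U Q z)^2
    + δ * (pdx (pdt U) z * Gfun κ b β U Q z)
    + δ/2 * (pdt U z)^2 + (α - δ^2)/2 * (pdx (pdt U) z)^2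
    + δ*α * (pdx (pdt U) z * pdx (pdx (pdx (pdt U))) z)
    - α * (pdx (pdx (pdx (pdt U))) z * Gfun κ b β U Q z)
    - α * (pdx (pdx (pdt U)) z * pdt U z)
    - α^2/2 * (pdx (pdx (pdx (pdt U))) z)^2

lemma Pfun_continuous {κ b β : ℝ} {U Q : ℝ × ℝ → ℝ}
    (hU : ContDiff ℝ (⊤ : ℕ∞) U) (hQ : ContDiff ℝ (⊤ : ℕ∞) Q) : Continuous (Pfun κ b β U Q) := by
  have c1 := hU.continuous
  have c2 := (contDiff_pdt hU).continuous
  have c3 := (contDiff_pdx hU).continuous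
  have c4 := (contDiff_pdx (contDiff_pdt hU)).continuous
  have c5 := hQ.continuous
  unfold Pfun
  fun_prop

lemma hasDerivAt_t_f {κ b β : ℝ} {U Q : ℝ × ℝ → ℝ}
    (hU : ContDiff ℝ (⊤ : ℕ∞) U) (hQ : ContDiff ℝ (⊤ : ℕ∞) Q)
    (heq2' : ∀ x t, pdt Q (x, t) = 2 * U (x, t) * pdt U (x, t)) (x t : ℝ) :
    HasDerivAt (fun s => κ/2 * (U (x, s))^2 - b/2 * (pdx U (x, s))^2
      + β/3 * U (x, s) * Q (x, s)) (Pfun κ b β U Q (x, t)) t := by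
  have h1 := hasDerivAt_pdt hU x t
  have h2 := hasDerivAt_pdt (contDiff_pdx hU) x t
  have h3 := hasDerivAt_pdt hQ x t
  have H := (((h1.pow 2).const_mul (κ/2)).sub ((h2.pow 2).const_mul (b/2))).add
    (((h1.const_mul (β/3)).mul h3))
  have hD : (κ/2 * (↑2 * U (x,t) ^ (2-1) * pdt U (x,t))
      - b/2 * (↑2 * pdx U (x,t) ^ (2-1) * pdt (pdx U) (x,t))
      + (β/3 * pdt U (x,t) * Q (x,t) + β/3 * U (x,t) * pdt Q (x,t)))
      = Pfun κ b β U Q (x, t) := by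
    rw [← pdx_pdt_comm hU (x, t), heq2' x t]
    simp only [Pfun]
    push_cast
    ring
  exact hD ▸ H

lemma hasDerivAt_x_F {κ b β δ α : ℝ} {U Q : ℝ × ℝ → ℝ}
    (hU : ContDiff ℝ (⊤ : ℕ∞) U) (hQ : ContDiff ℝ (⊤ : ℕ∞) Q)
    (heq1' : ∀ x t, pdt U (x,t) - δ * pdx (pdx (pdt U)) (x,t)
        + α * pdx (pdx (pdx (pdx (pdt U)))) (x,t)
      = -(κ * pdx U (x,t) + b * pdx (pdx (pdx U)) (x,t) + β/3 * pdx Q (x,t)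
          + 2*β/3 * (2 * U (x,t) * pdx U (x,t)))) (x t : ℝ) :
    HasDerivAt (fun y => Ffun κ b β δ α U Q (y, t)) (Pfun κ b β U Q (x, t)) x := by
  have cV := contDiff_pdt hU
  have hU0 := hasDerivAt_pdx hU x t
  have hU1 := hasDerivAt_pdx (contDiff_pdx hU) x t
  have hU2 := hasDerivAt_pdx (contDiff_pdx (contDiff_pdx hU)) x t
  have hQ0 := hasDerivAt_pdx hQ x t
  have hV0 := hasDerivAt_pdx cV x t
  have hV1 := hasDerivAt_pdx (contDiff_pdx cV) x t
  have hV2 := hasDerivAt_pdx (contDiff_pdx (contDiff_pdx cV)) x t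
  have hV3 := hasDerivAt_pdx (contDiff_pdx (contDiff_pdx (contDiff_pdx cV))) x t
  have hG : HasDerivAt (fun y => Gfun κ b β U Q (y, t))
      (κ * pdx U (x,t) + b * pdx (pdx (pdx U)) (x,t) + β/3 * pdx Q (x,t)
        + 2*β/3 * (↑2 * U (x,t) ^ (2-1) * pdx U (x,t))) x :=
    (((hU0.const_mul κ).add (hU2.const_mul b)).add (hQ0.const_mul (β/3))).add
      ((hU0.pow 2).const_mul (2*β/3))
  have H : HasDerivAt (fun y => Ffun κ b β δ α U Q (y, t))
      ((-b) * (pdx (pdx U) (x,t) * pdt U (x,t) + pdx U (x,t) * pdx (pdt U) (x,t))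
        - 1/2 * (↑2 * (Gfun κ b β U Q (x,t)) ^ (2-1)
            * (κ * pdx U (x,t) + b * pdx (pdx (pdx U)) (x,t) + β/3 * pdx Q (x,t)
              + 2*β/3 * (↑2 * U (x,t) ^ (2-1) * pdx U (x,t))))
        + δ * (pdx (pdx (pdt U)) (x,t) * Gfun κ b β U Q (x,t)
            + pdx (pdt U) (x,t) * (κ * pdx U (x,t) + b * pdx (pdx (pdx U)) (x,t)
              + β/3 * pdx Q (x,t) + 2*β/3 * (↑2 * U (x,t) ^ (2-1) * pdx U (x,t))))
        + δ/2 * (↑2 * (pdt U (x,t)) ^ (2-1) * pdx (pdt U) (x,t))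
        + (α - δ^2)/2 * (↑2 * (pdx (pdt U) (x,t)) ^ (2-1) * pdx (pdx (pdt U)) (x,t))
        + δ*α * (pdx (pdx (pdt U)) (x,t) * pdx (pdx (pdx (pdt U))) (x,t)
            + pdx (pdt U) (x,t) * pdx (pdx (pdx (pdx (pdt U)))) (x,t))
        - α * (pdx (pdx (pdx (pdx (pdt U)))) (x,t) * Gfun κ b β U Q (x,t)
            + pdx (pdx (pdx (pdt U))) (x,t) * (κ * pdx U (x,t)
              + b * pdx (pdx (pdx U)) (x,t) + β/3 * pdx Q (x,t)
              + 2*β/3 * (↑2 * U (x,t) ^ (2-1) * pdx U (x,t))))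
        - α * (pdx (pdx (pdx (pdt U))) (x,t) * pdt U (x,t)
            + pdx (pdx (pdt U)) (x,t) * pdx (pdt U) (x,t))
        - α^2/2 * (↑2 * (pdx (pdx (pdx (pdt U))) (x,t)) ^ (2-1)
            * pdx (pdx (pdx (pdx (pdt U)))) (x,t))) x :=
    (((((((((hU1.mul hV0).const_mul (-b)).sub ((hG.pow 2).const_mul (1/2))).add
      ((hV1.mul hG).const_mul δ)).add ((hV0.pow 2).const_mul (δ/2))).add
      ((hV1.pow 2).const_mul ((α - δ^2)/2))).add ((hV1.mul hV3).const_mul (δ*α))).sub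
      ((hV3.mul hG).const_mul α)).sub ((hV2.mul hV0).const_mul α)).sub
      ((hV3.pow 2).const_mul (α^2/2))
  have hD : ((-b) * (pdx (pdx U) (x,t) * pdt U (x,t) + pdx U (x,t) * pdx (pdt U) (x,t))
        - 1/2 * (↑2 * (Gfun κ b β U Q (x,t)) ^ (2-1)
            * (κ * pdx U (x,t) + b * pdx (pdx (pdx U)) (x,t) + β/3 * pdx Q (x,t)
              + 2*β/3 * (↑2 * U (x,t) ^ (2-1) * pdx U (x,t))))
        + δ * (pdx (pdx (pdt U)) (x,t) * Gfun κ b β U Q (x,t)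
            + pdx (pdt U) (x,t) * (κ * pdx U (x,t) + b * pdx (pdx (pdx U)) (x,t)
              + β/3 * pdx Q (x,t) + 2*β/3 * (↑2 * U (x,t) ^ (2-1) * pdx U (x,t))))
        + δ/2 * (↑2 * (pdt U (x,t)) ^ (2-1) * pdx (pdt U) (x,t))
        + (α - δ^2)/2 * (↑2 * (pdx (pdt U) (x,t)) ^ (2-1) * pdx (pdx (pdt U)) (x,t))
        + δ*α * (pdx (pdx (pdt U)) (x,t) * pdx (pdx (pdx (pdt U))) (x,t)
            + pdx (pdt U) (x,t) * pdx (pdx (pdx (pdx (pdt U)))) (x,t))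
        - α * (pdx (pdx (pdx (pdx (pdt U)))) (x,t) * Gfun κ b β U Q (x,t)
            + pdx (pdx (pdx (pdt U))) (x,t) * (κ * pdx U (x,t)
              + b * pdx (pdx (pdx U)) (x,t) + β/3 * pdx Q (x,t)
              + 2*β/3 * (↑2 * U (x,t) ^ (2-1) * pdx U (x,t))))
        - α * (pdx (pdx (pdx (pdt U))) (x,t) * pdt U (x,t)
            + pdx (pdx (pdt U)) (x,t) * pdx (pdt U) (x,t))
        - α^2/2 * (↑2 * (pdx (pdx (pdx (pdt U))) (x,t)) ^ (2-1)
            * pdx (pdx (pdx (pdx (pdt U)))) (x,t)))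
      = Pfun κ b β U Q (x, t) := by
    simp only [Pfun, Gfun]
    push_cast
    linear_combination (-(κ * U (x,t) + b * pdx (pdx U) (x,t) + β/3 * Q (x,t)
        + 2*β/3 * (U (x,t))^2) + δ * pdx (pdt U) (x,t)
        - α * pdx (pdx (pdx (pdt U))) (x,t)) * heq1' x t
  exact hD ▸ H

lemma Ffun_periodic {κ b β δ α L : ℝ} {U Q : ℝ × ℝ → ℝ}
    (hU : ContDiff ℝ (⊤ : ℕ∞) U)
    (hperU : ∀ x t, U (x + L, t) = U (x, t)) (hperQ : ∀ x t, Q (x + L, t) = Q (x, t)) :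
    ∀ x t, Ffun κ b β δ α U Q (x + L, t) = Ffun κ b β δ α U Q (x, t) := by
  have cV := contDiff_pdt hU
  have pU1 := pdx_periodic hU hperU
  have pU2 := pdx_periodic (contDiff_pdx hU) pU1
  have pV0 := pdt_periodic hU hperU
  have pV1 := pdx_periodic cV pV0
  have pV2 := pdx_periodic (contDiff_pdx cV) pV1
  have pV3 := pdx_periodic (contDiff_pdx (contDiff_pdx cV)) pV2
  intro x t
  simp only [Ffun, Gfun]
  rw [pU1 x t, pU2 x t, pV0 x t, pV1 x t, pV2 x t, pV3 x t, hperU x t, hperQ x t]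

set_option maxHeartbeats 2000000 in
lemma energy_eq {L : ℝ} (κ b β δ α : ℝ) {U Q : ℝ × ℝ → ℝ}
    (hU : ContDiff ℝ (⊤ : ℕ∞) U) (hQ : ContDiff ℝ (⊤ : ℕ∞) Q)
    (hperU : ∀ x t, U (x + L, t) = U (x, t)) (hperQ : ∀ x t, Q (x + L, t) = Q (x, t))
    (heq1' : ∀ x t, pdt U (x,t) - δ * pdx (pdx (pdt U)) (x,t)
        + α * pdx (pdx (pdx (pdx (pdt U)))) (x,t)
      = -(κ * pdx U (x,t) + b * pdx (pdx (pdx U)) (x,t) + β/3 * pdx Q (x,t)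
          + 2*β/3 * (2 * U (x,t) * pdx U (x,t))))
    (heq2' : ∀ x t, pdt Q (x, t) = 2 * U (x, t) * pdt U (x, t)) (t₁ t₂ : ℝ) :
    (∫ x in (0:ℝ)..L, (κ/2 * (U (x,t₁))^2 - b/2 * (pdx U (x,t₁))^2
        + β/3 * U (x,t₁) * Q (x,t₁)))
    = ∫ x in (0:ℝ)..L, (κ/2 * (U (x,t₂))^2 - b/2 * (pdx U (x,t₂))^2
        + β/3 * U (x,t₂) * Q (x,t₂)) := by
  have hP : Continuous (Pfun κ b β U Q) := Pfun_continuous hU hQ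
  have hfcont : Continuous (fun z : ℝ × ℝ => κ/2 * (U z)^2 - b/2 * (pdx U z)^2
      + β/3 * U z * Q z) := by
    have c1 := hU.continuous
    have c2 := (contDiff_pdx hU).continuous
    have c3 := hQ.continuous
    fun_prop
  have key : ∀ s₀ : ℝ, HasDerivAt (fun s => ∫ x in (0:ℝ)..L, (κ/2 * (U (x,s))^2
      - b/2 * (pdx U (x,s))^2 + β/3 * U (x,s) * Q (x,s))) 0 s₀ := by
    intro s₀
    obtain ⟨C, hC⟩ : ∃ C, ∀ z ∈ (Set.uIcc (0:ℝ) L) ×ˢ (Set.Icc (s₀-1) (s₀+1)),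
        ‖Pfun κ b β U Q z‖ ≤ C :=
      (isCompact_uIcc.prod isCompact_Icc).exists_bound_of_continuousOn hP.continuousOn
    have hmeas : ∀ᶠ s in nhds s₀, MeasureTheory.AEStronglyMeasurable
        (fun x => κ/2 * (U (x,s))^2 - b/2 * (pdx U (x,s))^2 + β/3 * U (x,s) * Q (x,s))
        (MeasureTheory.volume.restrict (Set.uIoc (0:ℝ) L)) :=
      Filter.Eventually.of_forall fun s =>
        (hfcont.comp (continuous_id.prodMk continuous_const)).aestronglyMeasurable
    have hint : IntervalIntegrable (fun x => κ/2 * (U (x,s₀))^2 - b/2 * (pdx U (x,s₀))^2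
        + β/3 * U (x,s₀) * Q (x,s₀)) MeasureTheory.volume 0 L :=
      (hfcont.comp (continuous_id.prodMk continuous_const)).intervalIntegrable 0 L
    have hmeas' : MeasureTheory.AEStronglyMeasurable (fun x => Pfun κ b β U Q (x,s₀))
        (MeasureTheory.volume.restrict (Set.uIoc (0:ℝ) L)) :=
      (hP.comp (continuous_id.prodMk continuous_const)).aestronglyMeasurable
    have hbound : ∀ᵐ x ∂MeasureTheory.volume, x ∈ Set.uIoc (0:ℝ) L →
        ∀ s ∈ Metric.ball s₀ 1, ‖Pfun κ b β U Q (x,s)‖ ≤ C := by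
      refine Filter.Eventually.of_forall fun x hx s hs => hC (x,s) ?_
      rw [Real.ball_eq_Ioo] at hs
      exact Set.mk_mem_prod (Set.uIoc_subset_uIcc hx) (Set.Ioo_subset_Icc_self hs)
    have hbint : IntervalIntegrable (fun _ : ℝ => C) MeasureTheory.volume 0 L :=
      intervalIntegrable_const
    have hdiff : ∀ᵐ x ∂MeasureTheory.volume, x ∈ Set.uIoc (0:ℝ) L →
        ∀ s ∈ Metric.ball s₀ 1, HasDerivAt (fun s => κ/2 * (U (x,s))^2
          - b/2 * (pdx U (x,s))^2 + β/3 * U (x,s) * Q (x,s)) (Pfun κ b β U Q (x,s)) s :=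
      Filter.Eventually.of_forall fun x _ s _ => hasDerivAt_t_f hU hQ heq2' x s
    have main := (intervalIntegral.hasDerivAt_integral_of_dominated_loc_of_deriv_le
      (Metric.ball_mem_nhds s₀ one_pos) hmeas hint hmeas' hbound hbint hdiff).2
    have h0 : (∫ x in (0:ℝ)..L, Pfun κ b β U Q (x,s₀)) = 0 := by
      have hftc := intervalIntegral.integral_eq_sub_of_hasDerivAt
        (f := fun y => Ffun κ b β δ α U Q (y,s₀))
        (fun x _ => hasDerivAt_x_F hU hQ heq1' x s₀)
        ((hP.comp (continuous_id.prodMk continuous_const)).intervalIntegrable 0 L)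
      rw [hftc]
      have hp := Ffun_periodic (κ := κ) (b := b) (β := β) (δ := δ) (α := α)
        hU hperU hperQ 0 s₀
      rw [zero_add] at hp
      show Ffun κ b β δ α U Q (L, s₀) - Ffun κ b β δ α U Q (0, s₀) = 0
      rw [hp, sub_self]
    rwa [h0] at main
  exact is_const_of_deriv_eq_zero (fun s => (key s).differentiableAt)
    (fun s => (key s).deriv) t₁ t₂

set_option maxHeartbeats 2000000 in
/-- A smooth `L`-periodic solution `(u, q)` of the
quadratic-auxiliary-variable reformulation (case `p = 2`) conserves the
quadratized energy `H(t) = ∫₀ᴸ ((κ/2)u² − (b/2)(∂ₓu)² + (β/3)uq) dx`. -/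
theorem rosenau_qav_energy_conservation
    (L : ℝ) (hL : 0 < L) (κ b β : ℝ) (δ α : ℝ) (hδ : 0 < δ) (hα : 0 < α)
    (u q : ℝ → ℝ → ℝ)  -- u x t, q x t
    (husmooth : ContDiff ℝ (⊤ : ℕ∞) (fun z : ℝ × ℝ => u z.1 z.2))
    (hqsmooth : ContDiff ℝ (⊤ : ℕ∞) (fun z : ℝ × ℝ => q z.1 z.2))
    (huper : ∀ x t, u (x + L) t = u x t)
    (hqper : ∀ x t, q (x + L) t = q x t)
    (heq1 : ∀ x t,
      deriv (fun s => u x s) t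
        - δ * iteratedDeriv 2 (fun y => deriv (fun s => u y s) t) x
        + α * iteratedDeriv 4 (fun y => deriv (fun s => u y s) t) x
      = - deriv (fun y => κ * u y t + b * iteratedDeriv 2 (fun z => u z t) y
          + (β / 3) * q y t + (2 * β / 3) * (u y t) ^ 2) x)
    (heq2 : ∀ x t,
      deriv (fun s => q x s) t = 2 * u x t * deriv (fun s => u x s) t) :
    ∀ t₁ t₂,
      (∫ x in (0:ℝ)..L,
        ((κ / 2) * (u x t₁) ^ 2 - (b / 2) * (deriv (fun y => u y t₁) x) ^ 2
          + (β / 3) * u x t₁ * q x t₁))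
      = (∫ x in (0:ℝ)..L,
        ((κ / 2) * (u x t₂) ^ 2 - (b / 2) * (deriv (fun y => u y t₂) x) ^ 2
          + (β / 3) * u x t₂ * q x t₂)) := by
  intro t₁ t₂
  have hU : ContDiff ℝ (⊤ : ℕ∞) (fun z : ℝ × ℝ => u z.1 z.2) := husmooth
  have hQ : ContDiff ℝ (⊤ : ℕ∞) (fun z : ℝ × ℝ => q z.1 z.2) := hqsmooth
  have heq2' : ∀ x t, pdt (fun z : ℝ × ℝ => q z.1 z.2) (x, t) = 2 * (fun z : ℝ × ℝ => u z.1 z.2) (x, t) * pdt (fun z : ℝ × ℝ => u z.1 z.2) (x, t) := by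
    intro x t
    have h1 : deriv (fun s => q x s) t = pdt (fun z : ℝ × ℝ => q z.1 z.2) (x, t) := deriv_pdt hQ x t
    have h2 : deriv (fun s => u x s) t = pdt (fun z : ℝ × ℝ => u z.1 z.2) (x, t) := deriv_pdt hU x t
    rw [← h1, heq2 x t, h2]
  have heq1' : ∀ x t, pdt (fun z : ℝ × ℝ => u z.1 z.2) (x,t) - δ * pdx (pdx (pdt (fun z : ℝ × ℝ => u z.1 z.2))) (x,t)
        + α * pdx (pdx (pdx (pdx (pdt (fun z : ℝ × ℝ => u z.1 z.2))))) (x,t)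
      = -(κ * pdx (fun z : ℝ × ℝ => u z.1 z.2) (x,t) + b * pdx (pdx (pdx (fun z : ℝ × ℝ => u z.1 z.2))) (x,t) + β/3 * pdx (fun z : ℝ × ℝ => q z.1 z.2) (x,t)
          + 2*β/3 * (2 * (fun z : ℝ × ℝ => u z.1 z.2) (x,t) * pdx (fun z : ℝ × ℝ => u z.1 z.2) (x,t))) := by
    intro x t
    have h2 : deriv (fun s => u x s) t = pdt (fun z : ℝ × ℝ => u z.1 z.2) (x, t) := deriv_pdt hU x t
    have hvfun : (fun y => deriv (fun s => u y s) t) = fun y => pdt (fun z : ℝ × ℝ => u z.1 z.2) (y, t) :=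
      funext fun y => deriv_pdt hU y t
    have h3 : iteratedDeriv 2 (fun y => deriv (fun s => u y s) t) x
        = pdx (pdx (pdt (fun z : ℝ × ℝ => u z.1 z.2))) (x, t) := by
      rw [hvfun]; exact iteratedDeriv_pdx (contDiff_pdt hU) 2 x t
    have h4 : iteratedDeriv 4 (fun y => deriv (fun s => u y s) t) x
        = pdx (pdx (pdx (pdx (pdt (fun z : ℝ × ℝ => u z.1 z.2))))) (x, t) := by
      rw [hvfun]; exact iteratedDeriv_pdx (contDiff_pdt hU) 4 x t
    have hrw : (fun y => κ * u y t + b * iteratedDeriv 2 (fun z => u z t) y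
          + (β / 3) * q y t + (2 * β / 3) * (u y t) ^ 2)
        = (fun y => κ * (fun z : ℝ × ℝ => u z.1 z.2) (y,t) + b * pdx (pdx (fun z : ℝ × ℝ => u z.1 z.2)) (y,t)
          + β/3 * (fun z : ℝ × ℝ => q z.1 z.2) (y,t) + 2*β/3 * ((fun z : ℝ × ℝ => u z.1 z.2) (y,t))^2) := by
      funext y
      rw [show iteratedDeriv 2 (fun z => u z t) y = pdx (pdx (fun z : ℝ × ℝ => u z.1 z.2)) (y, t) from
        iteratedDeriv_pdx hU 2 y t]
    have H := ((((hasDerivAt_pdx hU x t).const_mul κ).add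
        ((hasDerivAt_pdx (contDiff_pdx (contDiff_pdx hU)) x t).const_mul b)).add
        ((hasDerivAt_pdx hQ x t).const_mul (β/3))).add
        (((hasDerivAt_pdx hU x t).pow 2).const_mul (2*β/3))
    have h6 : deriv (fun y => κ * (fun z : ℝ × ℝ => u z.1 z.2) (y,t) + b * pdx (pdx (fun z : ℝ × ℝ => u z.1 z.2)) (y,t)
          + β/3 * (fun z : ℝ × ℝ => q z.1 z.2) (y,t) + 2*β/3 * ((fun z : ℝ × ℝ => u z.1 z.2) (y,t))^2) x
        = κ * pdx (fun z : ℝ × ℝ => u z.1 z.2) (x,t) + b * pdx (pdx (pdx (fun z : ℝ × ℝ => u z.1 z.2))) (x,t) + β/3 * pdx (fun z : ℝ × ℝ => q z.1 z.2) (x,t)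
          + 2*β/3 * (↑2 * (fun z : ℝ × ℝ => u z.1 z.2) (x,t) ^ (2-1) * pdx (fun z : ℝ × ℝ => u z.1 z.2) (x,t)) := H.deriv
    have h5 : deriv (fun y => κ * u y t + b * iteratedDeriv 2 (fun z => u z t) y
          + (β / 3) * q y t + (2 * β / 3) * (u y t) ^ 2) x
        = κ * pdx (fun z : ℝ × ℝ => u z.1 z.2) (x,t) + b * pdx (pdx (pdx (fun z : ℝ × ℝ => u z.1 z.2))) (x,t) + β/3 * pdx (fun z : ℝ × ℝ => q z.1 z.2) (x,t)
          + 2*β/3 * (2 * (fun z : ℝ × ℝ => u z.1 z.2) (x,t) * pdx (fun z : ℝ × ℝ => u z.1 z.2) (x,t)) := by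
      rw [hrw, h6]; push_cast; ring
    have key := heq1 x t
    rw [h2, h3, h4, h5] at key
    exact key
  have hI : ∀ t, (∫ x in (0:ℝ)..L,
        ((κ / 2) * (u x t) ^ 2 - (b / 2) * (deriv (fun y => u y t) x) ^ 2
          + (β / 3) * u x t * q x t))
      = ∫ x in (0:ℝ)..L, (κ/2 * ((fun z : ℝ × ℝ => u z.1 z.2) (x,t))^2 - b/2 * (pdx (fun z : ℝ × ℝ => u z.1 z.2) (x,t))^2
          + β/3 * (fun z : ℝ × ℝ => u z.1 z.2) (x,t) * (fun z : ℝ × ℝ => q z.1 z.2) (x,t)) := by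
    intro t
    apply intervalIntegral.integral_congr
    intro x _
    show (κ / 2) * (u x t) ^ 2 - (b / 2) * (deriv (fun y => u y t) x) ^ 2
        + (β / 3) * u x t * q x t = _
    rw [show deriv (fun y => u y t) x = pdx (fun z : ℝ × ℝ => u z.1 z.2) (x, t) from deriv_pdx hU x t]
  rw [hI t₁, hI t₂]
  exact energy_eq κ b β δ α hU hQ (fun x t => huper x t) (fun x t => hqper x t)
    heq1' heq2' t₁ t₂
end
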